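/- arXiv:2404.11268 — 9 statements merged into one kernel-verified Lean document; each statement's English description precedes it below -/
import Mathlib

section
/- For positive integers n, s, δ, ℓ with n ≥ 2s+1 ≥ 5 and ℓ ≥ 2, the function g_ℓ(n,s,t) = C(2s−t, ℓ) + C(t, ℓ−1)·(n + t − 2s − 1) + C(δ, ℓ−1) is convex as a function of the positive integer t on the range δ ≤ t ≤ s; that is, g_ℓ(n,s,t+1) + g_ℓ(n,s,t−1) ≥ 2·g_ℓ(n,s,t). -/
/-!
Each summand of `g_ℓ(n,s,·)` is discretely convex: `t ↦ C(t, k)` because its increments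
`C(t, k-1)` are nondecreasing, `t ↦ C(2s-t, ℓ)` as the reflection of a convex nondecreasing
sequence, and `t ↦ C(t, ℓ-1)·(n+t-2s-1)` as a product of two nondecreasing convex sequences.
-/

/-- The number of copies of `K_ℓ` in the extremal graph `G(n,s,t)`:
`g_ℓ(n,s,t) = C(2s−t, ℓ) + C(t, ℓ−1)·(n + t − 2s − 1) + C(δ, ℓ−1)`. -/
def gcl (n s δ ℓ t : ℕ) : ℕ :=
  Nat.choose (2 * s - t) ℓ + Nat.choose t (ℓ - 1) * (n + t - 2 * s - 1) +
    Nat.choose δ (ℓ - 1)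

/-- At `t = 0` the truncated `t - 1` makes this the condition `f 0 ≤ f 1`. -/
def MidConvexAt (f : ℕ → ℕ) (t : ℕ) : Prop :=
  2 * f t ≤ f (t + 1) + f (t - 1)

namespace MidConvexAt

variable {f g : ℕ → ℕ} {t : ℕ}

theorem const (c t : ℕ) : MidConvexAt (fun _ => c) t := by
  simp [MidConvexAt, two_mul]

theorem add (hf : MidConvexAt f t) (hg : MidConvexAt g t) :
    MidConvexAt (fun u => f u + g u) t := by
  simp only [MidConvexAt] at *
  omega

theorem mul (hf : MidConvexAt f t) (hg : MidConvexAt g t) (hf' : Monotone f)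
    (hg' : Monotone g) : MidConvexAt (fun u => f u * g u) t := by
  simp only [MidConvexAt] at *
  have hf₁ := hf' (Nat.sub_le t 1)
  have hf₂ := hf' (Nat.le_succ t)
  have hg₁ := hg' (Nat.sub_le t 1)
  have hg₂ := hg' (Nat.le_succ t)
  nlinarith [Nat.mul_le_mul (Nat.sub_le_sub_right hf₂ (f t)) (Nat.sub_le_sub_right hg₂ (g t))]

/-- Past `c` the reflected sequence is constant; at `t = c` its left neighbour is the larger
value because `f` is nondecreasing. -/
theorem comp_tsub (hf : ∀ u, MidConvexAt f u) (hf' : Monotone f) (c : ℕ) (ht : 1 ≤ t) :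
    MidConvexAt (fun u => f (c - u)) t := by
  simp only [MidConvexAt] at *
  rcases lt_or_ge t c with htc | hct
  · have := hf (c - t)
    rwa [show c - t + 1 = c - (t - 1) by omega, show c - t - 1 = c - (t + 1) by omega,
      add_comm] at this
  · rw [show c - t = 0 by omega, show c - (t + 1) = 0 by omega, two_mul]
    exact Nat.add_le_add_left (hf' (Nat.zero_le _)) _

end MidConvexAt

open MidConvexAt

theorem midConvexAt_add_tsub (a m t : ℕ) : MidConvexAt (fun u => a + u - m) t := by
  simp only [MidConvexAt]
  omega

theorem midConvexAt_choose (k u : ℕ) : MidConvexAt (fun u => u.choose k) u := by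
  simp only [MidConvexAt]
  rcases u with _ | v
  · simp [two_mul, Nat.choose_le_choose k (Nat.zero_le 1)]
  · rcases k with _ | j
    · simp
    · have : v.choose j ≤ (v + 1).choose j := Nat.choose_le_choose j (Nat.le_succ v)
      rw [Nat.add_sub_cancel, Nat.choose_succ_succ' (v + 1), Nat.choose_succ_succ' v]
      omega

theorem gcl_convex_general (n s δ ℓ t : ℕ) (hδ : 0 < δ) (hδt : δ ≤ t) :
    2 * gcl n s δ ℓ t ≤ gcl n s δ ℓ (t + 1) + gcl n s δ ℓ (t - 1) := by
  have hreflected : MidConvexAt (fun u => (2 * s - u).choose ℓ) t :=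
    comp_tsub (midConvexAt_choose ℓ) (Nat.choose_mono ℓ) (2 * s) (by omega)
  have hproduct : MidConvexAt (fun u => u.choose (ℓ - 1) * (n + u - 2 * s - 1)) t :=
    (midConvexAt_choose (ℓ - 1) t).mul
      (by simpa only [Nat.sub_sub] using midConvexAt_add_tsub n (2 * s + 1) t)
      (Nat.choose_mono _) (fun _ _ h => by omega)
  exact (hreflected.add hproduct).add (const _ t)

/-- for positive integers `n, s, δ, ℓ` with `n ≥ 2s+1 ≥ 5` and `ℓ ≥ 2`,
the function `t ↦ g_ℓ(n,s,t)` is convex on the range `δ ≤ t ≤ s`. -/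
theorem gcl_convex (n s δ ℓ t : ℕ) (hn : 0 < n) (hs : 0 < s) (hδ : 0 < δ) (hℓ2 : 2 ≤ ℓ)
    (hn2s : 2 * s + 1 ≤ n) (h5 : 5 ≤ 2 * s + 1) (hδt : δ ≤ t) (hts : t ≤ s) :
    2 * gcl n s δ ℓ t ≤ gcl n s δ ℓ (t + 1) + gcl n s δ ℓ (t - 1) :=
  gcl_convex_general n s δ ℓ t hδ hδt
end

section
/- Let s, t, r, r₁, r₂ be positive integers with r = r₁ + r₂ and t ≤ s − 1 (so 2s − t − 1 ≥ t). Then C(2s−t−1, r−1)·C(r, r₁) ≥ C(t, r₁)·C(2s−t−r₁−1, r−r₁−1) + C(t, r₂)·C(2s−t−r₂−1, r−r₂−1). -/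
/-!
Write `N = 2s − t − 1` and `k = r − 1`. Since `t ≤ N`, each summand is at most
`C(N, rⱼ)·C(N − rⱼ, k − rⱼ) = C(N, k)·C(k, rⱼ)`, and `C(k, r₁) + C(k, r₂) = C(r, r₁)` by Pascal's rule,
as `r₂ = k − (r₁ − 1)`.
-/

namespace Nat

theorem choose_mul_choose_sub_le_of_le {t N k j : ℕ} (htN : t ≤ N) (hjk : j ≤ k) :
    t.choose j * (N - j).choose (k - j) ≤ N.choose k * k.choose j :=
  calc t.choose j * (N - j).choose (k - j)
      ≤ N.choose j * (N - j).choose (k - j) := Nat.mul_le_mul_right _ (choose_le_choose _ htN)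
    _ = N.choose k * k.choose j := (choose_mul hjk).symm

theorem choose_add_sub_one_add_choose_add_sub_one {a b : ℕ} (ha : 0 < a) (hb : 0 < b) :
    (a + b - 1).choose a + (a + b - 1).choose b = (a + b).choose a := by
  obtain ⟨a, rfl⟩ : ∃ a', a = a' + 1 := ⟨a - 1, by omega⟩
  obtain ⟨b, rfl⟩ : ∃ b', b = b' + 1 := ⟨b - 1, by omega⟩
  have hsymm : (a + b + 1).choose (b + 1) = (a + b + 1).choose a :=
    choose_symm_of_eq_add (by omega)
  rw [show a + 1 + (b + 1) - 1 = a + b + 1 by omega,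
    show a + 1 + (b + 1) = a + b + 1 + 1 by omega, hsymm, choose_succ_succ' (a + b + 1) a,
    add_comm]

end Nat

theorem biclique_count_key_ineq_general (s t r r₁ r₂ : ℕ) (hr₁ : 0 < r₁)
    (hr₂ : 0 < r₂) (hr : r = r₁ + r₂) (hts : t ≤ s - 1) :
    Nat.choose t r₁ * Nat.choose (2 * s - t - r₁ - 1) (r - r₁ - 1) +
        Nat.choose t r₂ * Nat.choose (2 * s - t - r₂ - 1) (r - r₂ - 1) ≤
      Nat.choose (2 * s - t - 1) (r - 1) * Nat.choose r r₁ := by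
  subst hr
  set N := 2 * s - t - 1
  set k := r₁ + r₂ - 1
  have htN : t ≤ N := by omega
  have h₁ := Nat.choose_mul_choose_sub_le_of_le (j := r₁) (k := k) htN (by omega)
  have h₂ := Nat.choose_mul_choose_sub_le_of_le (j := r₂) (k := k) htN (by omega)
  rw [show 2 * s - t - r₁ - 1 = N - r₁ by omega, show 2 * s - t - r₂ - 1 = N - r₂ by omega,
    show r₁ + r₂ - r₁ - 1 = k - r₁ by omega, show r₁ + r₂ - r₂ - 1 = k - r₂ by omega,
    ← Nat.choose_add_sub_one_add_choose_add_sub_one hr₁ hr₂, Nat.mul_add]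
  exact Nat.add_le_add h₁ h₂

/-- for positive integers `s, t, r, r₁, r₂` with `r = r₁ + r₂` and
`t ≤ s − 1`, we have
`C(2s−t−1, r−1)·C(r, r₁) ≥ C(t, r₁)·C(2s−t−r₁−1, r−r₁−1) + C(t, r₂)·C(2s−t−r₂−1, r−r₂−1)`. -/
theorem biclique_count_key_ineq (s t r r₁ r₂ : ℕ) (hs : 0 < s) (ht : 0 < t) (hr₁ : 0 < r₁)
    (hr₂ : 0 < r₂) (hr : r = r₁ + r₂) (hts : t ≤ s - 1) :
    Nat.choose t r₁ * Nat.choose (2 * s - t - r₁ - 1) (r - r₁ - 1) +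
        Nat.choose t r₂ * Nat.choose (2 * s - t - r₂ - 1) (r - r₂ - 1) ≤
      Nat.choose (2 * s - t - 1) (r - 1) * Nat.choose r r₁ :=
  biclique_count_key_ineq_general s t r r₁ r₂ hr₁ hr₂ hr hts
end

section
/- Let s, t, r, r₁, r₂ be positive integers with r = r₁ + r₂ and 2s − t ≥ t (i.e., t ≤ s). Then C(2s−t−1, r−2)·C(r, r₁) ≥ C(t−1, r₁)·C(2s−t−r₁−1, r−r₁−2) + C(t−1, r₂)·C(2s−t−r₂−1, r−r₂−2). -/
/-!
Put `a = t - 1 ≤ n = 2s - t - 1`. Then `C(a, r₁) ≤ C(n, r₁)`, and trinomial revision rewrites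
`C(n, r₁) C(n - r₁, r₂ - 2)` as `C(n, r - 2) C(r - 2, r₁)`; likewise for `r₂`. It remains to see
`C(r - 2, r₁) + C(r - 2, r₂) ≤ C(r, r₁)`: by symmetry the left side is
`C(r - 2, r₁) + C(r - 2, r₁ - 2)`, and two applications of Pascal's rule give `C(r, r₁)`.
-/

/-- Binomial coefficient extended to integer arguments: `C(n, k) = 0` when `k < 0`,
`n < 0` or `k > n`. -/
def zchoose (n k : ℤ) : ℤ :=
  if 0 ≤ k ∧ 0 ≤ n then (Nat.choose n.toNat k.toNat : ℤ) else 0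

lemma zchoose_nonneg (n k : ℤ) : 0 ≤ zchoose n k := by
  unfold zchoose; split <;> positivity

@[simp, norm_cast]
lemma zchoose_natCast (n k : ℕ) : zchoose n k = n.choose k := by
  simp [zchoose]

lemma zchoose_of_neg {n k : ℤ} (h : k < 0 ∨ n < 0) : zchoose n k = 0 := by
  unfold zchoose
  rw [if_neg]
  omega

lemma Nat.choose_mul_choose_sub_le {a n : ℕ} (h : a ≤ n) (i j : ℕ) :
    a.choose i * (n - i).choose j ≤ n.choose (i + j) * (i + j).choose i := by
  rw [Nat.choose_mul (Nat.le_add_right i j), Nat.add_sub_cancel_left]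
  exact Nat.mul_le_mul_right _ (Nat.choose_le_choose i h)

lemma zchoose_mul_zchoose_sub_le {a n : ℤ} (ha : 0 ≤ a) (han : a ≤ n) (i : ℕ) (j : ℤ) :
    zchoose a i * zchoose (n - i) j ≤ zchoose n (i + j) * zchoose (i + j) i := by
  by_cases h : 0 ≤ j ∧ (i : ℤ) ≤ n
  · obtain ⟨hj, hin⟩ := h
    lift n to ℕ using ha.trans han
    lift a to ℕ using ha
    lift j to ℕ using hj
    rw [← Nat.cast_sub (by omega)]
    exact_mod_cast Nat.choose_mul_choose_sub_le (by omega) i j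
  · rw [zchoose_of_neg (n := n - i) (k := j) (by omega), mul_zero]
    exact mul_nonneg (zchoose_nonneg _ _) (zchoose_nonneg _ _)

lemma Nat.choose_sub_two_add_choose_sub_two_le {r₁ r₂ : ℕ} (h₁ : 0 < r₁) (h₂ : 0 < r₂) :
    (r₁ + r₂ - 2).choose r₁ + (r₁ + r₂ - 2).choose r₂ ≤ (r₁ + r₂).choose r₁ := by
  obtain ⟨k, rfl⟩ : ∃ k, r₁ = k + 1 := ⟨r₁ - 1, by omega⟩
  obtain ⟨m, rfl⟩ : ∃ m, r₂ = m + 1 := ⟨r₂ - 1, by omega⟩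
  have hsymm : (k + m + 1).choose (m + 1) = (k + m + 1).choose k :=
    Nat.choose_symm_of_eq_add (by omega)
  rw [show k + 1 + (m + 1) - 2 = k + m by omega, show k + 1 + (m + 1) = k + m + 1 + 1 by omega]
  calc (k + m).choose (k + 1) + (k + m).choose (m + 1)
      ≤ (k + m + 1).choose (k + 1) + (k + m + 1).choose (m + 1) :=
        add_le_add (Nat.choose_le_choose _ (Nat.le_add_right _ 1))
          (Nat.choose_le_choose _ (Nat.le_add_right _ 1))
    _ = (k + m + 1).choose k + (k + m + 1).choose (k + 1) := by rw [hsymm, add_comm]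
    _ = (k + m + 1 + 1).choose (k + 1) := (Nat.choose_succ_succ' _ _).symm

theorem biclique_convexity_key_ineq_general (s t r r₁ r₂ : ℕ) (ht : 0 < t)
    (hr₁ : 0 < r₁) (hr₂ : 0 < r₂) (hr : r = r₁ + r₂) (hts : t ≤ s) :
    zchoose ((t : ℤ) - 1) r₁ * zchoose (2 * (s : ℤ) - t - r₁ - 1) ((r : ℤ) - r₁ - 2) +
        zchoose ((t : ℤ) - 1) r₂ * zchoose (2 * (s : ℤ) - t - r₂ - 1) ((r : ℤ) - r₂ - 2) ≤
      zchoose (2 * (s : ℤ) - t - 1) ((r : ℤ) - 2) * zchoose r r₁ := by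
  set n : ℤ := 2 * (s : ℤ) - t - 1
  have hpascal : zchoose ((r : ℤ) - 2) r₁ + zchoose ((r : ℤ) - 2) r₂ ≤ zchoose r r₁ := by
    rw [show (r : ℤ) - 2 = ((r₁ + r₂ - 2 : ℕ) : ℤ) by omega, hr]
    exact_mod_cast Nat.choose_sub_two_add_choose_sub_two_le hr₁ hr₂
  calc _ = zchoose ((t : ℤ) - 1) r₁ * zchoose (n - r₁) ((r₂ : ℤ) - 2) +
          zchoose ((t : ℤ) - 1) r₂ * zchoose (n - r₂) ((r₁ : ℤ) - 2) := by
        congr 3 <;> omega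
    _ ≤ zchoose n (r₁ + ((r₂ : ℤ) - 2)) * zchoose (r₁ + ((r₂ : ℤ) - 2)) r₁ +
          zchoose n (r₂ + ((r₁ : ℤ) - 2)) * zchoose (r₂ + ((r₁ : ℤ) - 2)) r₂ :=
        add_le_add (zchoose_mul_zchoose_sub_le (by omega) (by omega) _ _)
          (zchoose_mul_zchoose_sub_le (by omega) (by omega) _ _)
    _ = zchoose n ((r : ℤ) - 2) * (zchoose ((r : ℤ) - 2) r₁ + zchoose ((r : ℤ) - 2) r₂) := by
        rw [show (r₁ : ℤ) + (r₂ - 2) = r - 2 by omega, show (r₂ : ℤ) + (r₁ - 2) = r - 2 by omega]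
        ring
    _ ≤ _ := mul_le_mul_of_nonneg_left hpascal (zchoose_nonneg _ _)

/-- for positive integers `s, t, r, r₁, r₂` with `r = r₁ + r₂` and
`2s − t ≥ t`, we have
`C(2s−t−1, r−2)·C(r, r₁) ≥ C(t−1, r₁)·C(2s−t−r₁−1, r−r₁−2) + C(t−1, r₂)·C(2s−t−r₂−1, r−r₂−2)`. -/
theorem biclique_convexity_key_ineq (s t r r₁ r₂ : ℕ) (hs : 0 < s) (ht : 0 < t)
    (hr₁ : 0 < r₁) (hr₂ : 0 < r₂) (hr : r = r₁ + r₂) (hts : t ≤ s) :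
    zchoose ((t : ℤ) - 1) r₁ * zchoose (2 * (s : ℤ) - t - r₁ - 1) ((r : ℤ) - r₁ - 2) +
        zchoose ((t : ℤ) - 1) r₂ * zchoose (2 * (s : ℤ) - t - r₂ - 1) ((r : ℤ) - r₂ - 2) ≤
      zchoose (2 * (s : ℤ) - t - 1) ((r : ℤ) - 2) * zchoose r r₁ :=
  biclique_convexity_key_ineq_general s t r r₁ r₂ ht hr₁ hr₂ hr hts
end

section
/- Let n, s, r, r₁, r₂ be positive integers with r = r₁ + r₂ and n ≥ 2s + 1. The function h(t) = C(2s−t, r)·C(r, r₁) + Σ_{j=1,2} C(t, r_j)·(C(n−r_j−1, r−r_j) − C(2s−t−r_j, r−r_j)) is convex as a function of the positive integer t on 1 ≤ t ≤ s; that is, h(t+1) + h(t−1) ≥ 2·h(t) for 1 < t < s. -/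
/-! Write `m = 2s - t`. The first summand `C(m, r) * C(r, r₁)` has second difference
`C(m - 1, r - 2) * C(r, r₁)` in `t`. The summand for `b = r_j`, `c = r - b` is
`a(t) * (K - q(t))` with `K = C(n - b - 1, c)`, `a(t) = C(t, b)` convex and nondecreasing and
`q(t) = C(m - b, c)` convex and nonincreasing, so its second difference is at least
`Δ²a * (K - q(t)) - a(t - 1) * Δ²q`. For `b ≥ 2` the loss `C(t - 1, b) * C(m - b - 1, c - 2)` is
paid by `C(t - 1, b - 2) * (K - q(t))`, because `C(t - 1, b) ≤ C(t - 1, b - 2) * C(t - 1, 2)`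
and, by Vandermonde and `n ≥ 2s + 1`,
`K - q(t) ≥ C(2s - b, c) - C(m - b, c) ≥ C(t, 2) * C(m - b, c - 2)`.
For `b = 1` the loss is at most `(r - 2) * C(m - 1, r - 2) ≤ C(r, 1) * C(m - 1, r - 2)`, which the
first summand pays for. -/

/-- The function `h(t) = C(2s−t, r)·C(r, r₁)
  + Σ_{j=1,2} C(t, r_j)·(C(n−r_j−1, r−r_j) − C(2s−t−r_j, r−r_j))`
counting (up to the symmetry factor) copies of `K_{r₁,r₂}` in `G(n,s,t)`. -/
def hBip (n s r r₁ r₂ t : ℕ) : ℕ :=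
  Nat.choose (2 * s - t) r * Nat.choose r r₁ +
    (Nat.choose t r₁ * (Nat.choose (n - r₁ - 1) (r - r₁) - Nat.choose (2 * s - t - r₁) (r - r₁)) +
      Nat.choose t r₂ * (Nat.choose (n - r₂ - 1) (r - r₂) - Nat.choose (2 * s - t - r₂) (r - r₂)))

open Finset

namespace Nat

theorem choose_add_le_choose_mul_choose (n k j : ℕ) :
    n.choose (k + j) ≤ n.choose k * n.choose j := by
  rcases lt_or_ge n (k + j) with h | h
  · simp [choose_eq_zero_of_lt h]
  calc n.choose (k + j) ≤ n.choose (k + j) * (k + j).choose k :=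
        Nat.le_mul_of_pos_right _ (choose_pos (by omega))
    _ = n.choose k * (n - k).choose j := by rw [choose_mul (by omega), Nat.add_sub_cancel_left]
    _ ≤ n.choose k * n.choose j := Nat.mul_le_mul_left _ (choose_le_choose j (by omega))

theorem choose_add_add_choose_mul_choose_le (x w d i : ℕ) (hi : 0 < i) :
    x.choose (d + i) + w.choose i * x.choose d ≤ (x + w).choose (d + i) := by
  rw [add_choose_eq]
  have hsub : ({(d + i, 0), (d, i)} : Finset (ℕ × ℕ)) ⊆ antidiagonal (d + i) := by
    simp [insert_subset_iff]
  calc x.choose (d + i) + w.choose i * x.choose d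
      = ∑ ij ∈ {(d + i, 0), (d, i)}, x.choose ij.1 * w.choose ij.2 := by
        rw [sum_pair (by simp [hi.ne])]; simp [mul_comm]
    _ ≤ _ := sum_le_sum_of_subset hsub

theorem choose_add_two_add_choose (y c : ℕ) :
    (y + 2).choose (c + 2) + y.choose (c + 2) = 2 * (y + 1).choose (c + 2) + y.choose c := by
  simp only [choose_succ_succ, add_assoc]
  ring

theorem choose_add_two_add_choose_of_lt_two (y : ℕ) {c : ℕ} (hc : c < 2) :
    (y + 2).choose c + y.choose c = 2 * (y + 1).choose c := by
  interval_cases c <;> simp; ring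

end Nat

-- Discrete Leibniz rule, indices 0, 1, 2 standing for `t - 1, t, t + 1`:
-- `a₂ (K - q₂) + a₀ (K - q₀) - 2 a₁ (K - q₁) = Δ²a (K - q₁) + (a₂ - a₀) (q₁ - q₂) - a₀ Δ²q`
theorem two_mul_mul_sub_le_of_second_diff {R : Type*} [CommRing R] [LinearOrder R]
    [IsStrictOrderedRing R] {a₀ a₁ a₂ q₀ q₁ q₂ K e : R} (ha : a₀ ≤ a₂) (hq : q₂ ≤ q₁)
    (h : a₀ * (q₀ + q₂ - 2 * q₁) ≤ (a₀ + a₂ - 2 * a₁) * (K - q₁) + e) :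
    2 * (a₁ * (K - q₁)) ≤ a₂ * (K - q₂) + a₀ * (K - q₀) + e := by
  nlinarith [mul_nonneg (sub_nonneg.2 ha) (sub_nonneg.2 hq)]

theorem mul_choose_second_diff_le {a X : ℤ} {y c : ℕ} (hX : 0 ≤ X)
    (h : ∀ d, c = d + 2 → a * y.choose d ≤ X) :
    a * ((y + 2).choose c + y.choose c - 2 * (y + 1).choose c) ≤ X := by
  rcases lt_or_ge c 2 with hc | hc
  · have hΔq : ((y + 2).choose c + y.choose c : ℤ) = 2 * (y + 1).choose c :=
      mod_cast Nat.choose_add_two_add_choose_of_lt_two y hc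
    rwa [hΔq, sub_self, mul_zero]
  obtain ⟨d, rfl⟩ : ∃ d, c = d + 2 := ⟨c - 2, by omega⟩
  have hΔq : ((y + 2).choose (d + 2) + y.choose (d + 2) : ℤ) =
      2 * (y + 1).choose (d + 2) + y.choose d := mod_cast Nat.choose_add_two_add_choose y d
  rw [hΔq, add_sub_cancel_left]
  exact h d rfl

section SecondDifference

variable {u y c K : ℕ}

theorem choose_mul_choose_le_choose_mul_sub {k d : ℕ} (hK : (y + u + 2).choose (d + 2) ≤ K) :
    u.choose (k + 2) * y.choose d ≤ u.choose k * (K - (y + 1).choose (d + 2)) := by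
  have hvan := Nat.choose_add_add_choose_mul_choose_le (y + 1) (u + 1) d 2 two_pos
  rw [show y + 1 + (u + 1) = y + u + 2 by ring] at hvan
  calc u.choose (k + 2) * y.choose d
      ≤ u.choose k * u.choose 2 * (y + 1).choose d :=
        Nat.mul_le_mul (Nat.choose_add_le_choose_mul_choose u k 2)
          (Nat.choose_le_choose d y.le_succ)
    _ ≤ u.choose k * ((u + 1).choose 2 * (y + 1).choose d) := by
        rw [mul_assoc]; gcongr; omega
    _ ≤ u.choose k * (K - (y + 1).choose (d + 2)) := by
        gcongr; omega

theorem two_mul_choose_mul_sub_le {b : ℕ} (hb : 2 ≤ b) (hK : (y + u + 2).choose c ≤ K) :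
    2 * ((u + 1).choose b * (K - (y + 1).choose c)) ≤
      (u + 2).choose b * (K - y.choose c) + u.choose b * (K - (y + 2).choose c) := by
  obtain ⟨k, rfl⟩ : ∃ k, b = k + 2 := ⟨b - 2, by omega⟩
  have hq₀ : y.choose c ≤ K := (Nat.choose_le_choose c (by omega)).trans hK
  have hq₁ : (y + 1).choose c ≤ K := (Nat.choose_le_choose c (by omega)).trans hK
  have hq₂ : (y + 2).choose c ≤ K := (Nat.choose_le_choose c (by omega)).trans hK
  have hΔa : ((u + 2).choose (k + 2) + u.choose (k + 2) : ℤ) =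
      2 * (u + 1).choose (k + 2) + u.choose k := mod_cast Nat.choose_add_two_add_choose u k
  zify [hq₀, hq₁, hq₂]
  refine (two_mul_mul_sub_le_of_second_diff ?_ ?_ ?_).trans_eq (add_zero _)
  · exact_mod_cast Nat.choose_le_choose _ (by omega)
  · exact_mod_cast Nat.choose_le_choose _ (by omega)
  rw [add_zero, show ((u.choose (k + 2) : ℤ) + (u + 2).choose (k + 2) - 2 * (u + 1).choose (k + 2))
    = u.choose k by linarith]
  refine mul_choose_second_diff_le
    (mul_nonneg (Nat.cast_nonneg _) (sub_nonneg.2 (mod_cast hq₁))) fun d hd => ?_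
  subst hd
  exact_mod_cast choose_mul_choose_le_choose_mul_sub hK

theorem mul_choose_le_succ_mul_choose_succ {d : ℕ} (hu : u ≤ y + 1) :
    u * y.choose d ≤ (d + 1) * (y + 1).choose (d + 1) :=
  calc u * y.choose d ≤ (y + 1) * y.choose d := Nat.mul_le_mul_right _ hu
    _ = (d + 1) * (y + 1).choose (d + 1) := by rw [Nat.add_one_mul_choose_eq, mul_comm]

theorem two_mul_succ_mul_sub_le (hK : (y + 2).choose c ≤ K) (hu : u ≤ y + 1) :
    2 * ((u + 1) * (K - (y + 1).choose c)) ≤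
      (u + 2) * (K - y.choose c) + u * (K - (y + 2).choose c) +
        (c - 1) * (y + 1).choose (c - 1) := by
  have hq₀ : y.choose c ≤ K := (Nat.choose_le_choose c (by omega)).trans hK
  have hq₁ : (y + 1).choose c ≤ K := (Nat.choose_le_choose c (by omega)).trans hK
  zify [hK, hq₀, hq₁]
  refine two_mul_mul_sub_le_of_second_diff (by linarith)
    (mod_cast Nat.choose_le_choose _ (by omega)) ?_
  rw [show ((u : ℤ) + (u + 2) - 2 * (u + 1)) = 0 by ring, zero_mul, zero_add]
  refine mul_choose_second_diff_le (by positivity) fun d hd => ?_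
  subst hd
  exact_mod_cast mul_choose_le_succ_mul_choose_succ hu

end SecondDifference

def bipTerm (n s r b t : ℕ) : ℕ :=
  t.choose b * ((n - b - 1).choose (r - b) - (2 * s - t - b).choose (r - b))

theorem hBip_eq (n s r r₁ r₂ t : ℕ) :
    hBip n s r r₁ r₂ t =
      (2 * s - t).choose r * r.choose r₁ + (bipTerm n s r r₁ t + bipTerm n s r r₂ t) :=
  rfl

def bipDefect (r b : ℕ) : ℕ := if b = 1 then r - 2 else 0

theorem bipTerm_convex {n s r b t : ℕ} (hb : 0 < b) (hn : 2 * s + 1 ≤ n) (hts : t < s) :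
    2 * bipTerm n s r b t ≤ bipTerm n s r b (t + 1) + bipTerm n s r b (t - 1) +
      bipDefect r b * (2 * s - t - 1).choose (r - 2) := by
  rcases lt_or_ge t b with htb | hbt
  · simp [bipTerm, Nat.choose_eq_zero_of_lt htb]
  obtain ⟨u, rfl⟩ : ∃ u, t = u + 1 := ⟨t - 1, by omega⟩
  set y := 2 * s - (u + 1) - b - 1
  have hK : (y + u + 2).choose (r - b) ≤ (n - b - 1).choose (r - b) :=
    Nat.choose_le_choose _ (by omega)
  simp only [bipTerm, bipDefect, Nat.add_sub_cancel, show 2 * s - (u + 1 + 1) - b = y by omega,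
    show 2 * s - (u + 1) - b = y + 1 by omega, show 2 * s - u - b = y + 2 by omega]
  obtain rfl | hb := (show 1 ≤ b from hb).eq_or_lt
  · simp only [Nat.choose_one_right, if_true]
    rw [show r - 2 = r - 1 - 1 by omega, show 2 * s - (u + 1) - 1 = y + 1 by omega]
    exact two_mul_succ_mul_sub_le ((Nat.choose_le_choose _ (by omega)).trans hK) (by omega)
  · rw [if_neg hb.ne', zero_mul, add_zero]
    exact two_mul_choose_mul_sub_le hb hK

theorem bipDefect_add_le {r₁ r₂ : ℕ} (h₁ : 0 < r₁) (h₂ : 0 < r₂) :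
    bipDefect (r₁ + r₂) r₁ + bipDefect (r₁ + r₂) r₂ ≤ (r₁ + r₂).choose r₁ := by
  unfold bipDefect
  split_ifs <;> subst_vars <;> simp [Nat.choose_succ_self_right]
  omega

theorem choose_sub_add_choose_sub {N t r : ℕ} (ht : 0 < t) (htN : t < N) (hr : 2 ≤ r) :
    (N - (t + 1)).choose r + (N - (t - 1)).choose r =
      2 * (N - t).choose r + (N - t - 1).choose (r - 2) := by
  obtain ⟨c, rfl⟩ : ∃ c, r = c + 2 := ⟨r - 2, by omega⟩
  rw [show N - (t + 1) = N - t - 1 by omega, show N - (t - 1) = N - t - 1 + 2 by omega,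
    show N - t = N - t - 1 + 1 by omega, Nat.add_sub_cancel, add_comm]
  exact Nat.choose_add_two_add_choose _ _

theorem hBip_convex_general (n s r r₁ r₂ t : ℕ) (hr₁ : 0 < r₁)
    (hr₂ : 0 < r₂) (hr : r = r₁ + r₂) (hn2s : 2 * s + 1 ≤ n) (ht1 : 1 < t) (hts : t < s) :
    2 * hBip n s r r₁ r₂ t ≤ hBip n s r r₁ r₂ (t + 1) + hBip n s r r₁ r₂ (t - 1) := by
  have h₁ := bipTerm_convex (r := r) hr₁ hn2s hts
  have h₂ := bipTerm_convex (r := r) hr₂ hn2s hts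
  have hA := congrArg (· * r.choose r₁)
    (choose_sub_add_choose_sub (N := 2 * s) (r := r) (by omega : 0 < t) (by omega) (by omega))
  have hD := Nat.mul_le_mul_right ((2 * s - t - 1).choose (r - 2)) (hr ▸ bipDefect_add_le hr₁ hr₂)
  simp only [hBip_eq]
  linarith

/-- for positive integers `n, s, r, r₁, r₂` with `r = r₁ + r₂` and
`n ≥ 2s + 1`, the function `h` is convex on `1 ≤ t ≤ s`. -/
theorem hBip_convex (n s r r₁ r₂ t : ℕ) (hn : 0 < n) (hs : 0 < s) (hr₁ : 0 < r₁)
    (hr₂ : 0 < r₂) (hr : r = r₁ + r₂) (hn2s : 2 * s + 1 ≤ n) (ht1 : 1 < t) (hts : t < s) :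
    2 * hBip n s r r₁ r₂ t ≤ hBip n s r r₁ r₂ (t + 1) + hBip n s r r₁ r₂ (t - 1) :=
  hBip_convex_general n s r r₁ r₂ t hr₁ hr₂ hr hn2s ht1 hts
end

section
/- The fractional matching number of any graph G satisfies 2·ν*(G) is an integer, where ν*(G) is the maximum over all fractional matchings f of Σ_{e ∈ E(G)} f(e). -/
/-!
Let `d = max_W (|W| - |N(W)|)`; then `2ν*(G) = |V| - d`. Upper bound: the load of a fractional
matching on `W` is carried by edges into `N(W)`, so it is at most `|N(W)|`, and the other
vertices carry at most `|V| - |W|`; as every edge is counted twice, `2 Σ f ≤ |V| - |W| + |N(W)|`.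
Lower bound: Hall's theorem with `d` dummy vertices injects all but `d` vertices `a` into
neighbours `m a`; weight `1/2` on each edge `{a, m a}` is a fractional matching of value
`(|V| - d) / 2`, since a vertex occurs at most once as some `a` and at most once as some `m a`.
-/

/-- `f` is a fractional matching of `G`: edge weights in `[0,1]`, supported on the
edges of `G`, with total weight at most `1` at every vertex. -/
def IsFracMatching {V : Type*} [Fintype V] [DecidableEq V] (G : SimpleGraph V)
    [DecidableRel G.Adj] (f : Sym2 V → ℝ) : Prop :=
  (∀ e, 0 ≤ f e ∧ f e ≤ 1) ∧ (∀ e, e ∉ G.edgeSet → f e = 0) ∧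
    ∀ v : V, ∑ e ∈ G.incidenceFinset v, f e ≤ 1

/-- `s` is the fractional matching number of `G`: it is attained by some fractional
matching, and no fractional matching has larger total weight. -/
def IsFracMatchingNumber {V : Type*} [Fintype V] [DecidableEq V] (G : SimpleGraph V)
    [DecidableRel G.Adj] (s : ℝ) : Prop :=
  (∃ f, IsFracMatching G f ∧ ∑ e ∈ G.edgeFinset, f e = s) ∧
    ∀ f, IsFracMatching G f → ∑ e ∈ G.edgeFinset, f e ≤ s

open Finset

theorem Finset.exists_injective_of_card_le_card_biUnion_add {ι α : Type*} [DecidableEq α]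
    (t : ι → Finset α) (D : ℕ) (h : ∀ s : Finset ι, #s ≤ #(s.biUnion t) + D) :
    ∃ m : ι → α ⊕ Fin D, m.Injective ∧ ∀ i a, m i = .inl a → a ∈ t i := by
  let t' (i : ι) : Finset (α ⊕ Fin D) := (t i).disjSum univ
  have hall (s : Finset ι) : #s ≤ #(s.biUnion t') := by
    rcases s.eq_empty_or_nonempty with rfl | ⟨i₀, hi₀⟩
    · simp
    have hunion : s.biUnion t' = (s.biUnion t).disjSum univ := by
      ext (a | j)
      · simp [t']
      · simpa [t'] using ⟨i₀, hi₀⟩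
    simpa [hunion] using h s
  obtain ⟨m, hm, hmt⟩ := (all_card_le_biUnion_card_iff_exists_injective _).mp hall
  exact ⟨m, hm, fun i a hi => by simpa [t', hi] using hmt i⟩

theorem Function.Injective.card_le_card_filter_isLeft_add {ι α : Type*} [Fintype ι] {D : ℕ}
    {m : ι → α ⊕ Fin D} (hm : m.Injective) :
    Fintype.card ι ≤ #{i | (m i).isLeft} + D := by
  have hright : #{i | ¬(m i).isLeft} ≤ D := by
    simpa using card_le_card_of_injOn m (t := univ.map .inr) (fun i hi => by
      obtain ⟨j, hj⟩ := Sum.isRight_iff.mp (by simpa using hi)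
      simp [hj]) hm.injOn
  rw [← card_univ, ← card_filter_add_card_filter_not fun i => (m i).isLeft]
  omega

noncomputable def Sym2.symmetrize {α R : Type*} [DivisionSemiring R] (g : α → α → R) :
    Sym2 α → R :=
  Sym2.lift ⟨fun a b => (g a b + g b a) / 2, fun a b => by simp only [add_comm]⟩

@[simp]
theorem Sym2.symmetrize_mk {α R : Type*} [DivisionSemiring R] (g : α → α → R) (a b : α) :
    Sym2.symmetrize g s(a, b) = (g a b + g b a) / 2 :=
  Sym2.lift_mk _ a b

namespace SimpleGraph

variable {V : Type*} [Fintype V] [DecidableEq V] (G : SimpleGraph V) [DecidableRel G.Adj]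

section Sums

variable {M : Type*} [AddCommMonoid M] {G} {f : Sym2 V → M}

theorem sum_incidenceFinset_eq_sum (hf : ∀ e ∉ G.edgeSet, f e = 0) (v : V) :
    ∑ e ∈ G.incidenceFinset v, f e = ∑ u, f s(v, u) := by
  rw [← sum_subset (subset_univ (G.neighborFinset v)) fun u _ hu =>
    hf _ (by simpa using hu)]
  refine (sum_nbij (fun u => s(v, u)) (fun u hu => by simpa using hu)
    (fun a _ b _ hab => Sym2.congr_right.mp hab) (fun e he => ?_) fun _ _ => rfl).symm
  have hinc := (G.mem_incidenceFinset v e).mp (mem_coe.mp he)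
  have hv : v ∈ e := hinc.2
  refine ⟨Sym2.Mem.other hv, ?_, Sym2.other_spec hv⟩
  rw [← Sym2.other_spec hv] at hinc
  simpa using G.mem_incidence_iff_neighbor.mp hinc

theorem sum_sum_eq_two_nsmul_sum_edgeFinset (hf : ∀ e ∉ G.edgeSet, f e = 0) :
    ∑ v, ∑ u, f s(v, u) = 2 • ∑ e ∈ G.edgeFinset, f e := by
  simp_rw [← sum_incidenceFinset_eq_sum hf, incidenceFinset_eq_filter, sum_filter]
  rw [sum_comm, smul_sum]
  refine sum_congr rfl fun e he => ?_
  have hends : ({u | u ∈ e} : Finset V) = e.toFinset := by ext; simp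
  rw [← sum_filter, sum_const, hends,
    Sym2.card_toFinset_of_not_isDiag _ (G.not_isDiag_of_mem_edgeSet (mem_edgeFinset.mp he))]

end Sums

-- The truncated subtraction is harmless: `W = ∅` already contributes `0`.
def deficiency : ℕ := univ.sup fun W : Finset V => #W - #(W.biUnion fun v => G.neighborFinset v)

theorem card_le_card_biUnion_neighborFinset_add_deficiency (W : Finset V) :
    #W ≤ #(W.biUnion fun v => G.neighborFinset v) + G.deficiency := by
  have : #W - #(W.biUnion fun v => G.neighborFinset v) ≤ G.deficiency :=
    le_sup (f := fun W : Finset V => #W - #(W.biUnion fun v => G.neighborFinset v)) (mem_univ W)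
  omega

theorem exists_card_biUnion_neighborFinset_add_deficiency_eq :
    ∃ W : Finset V, #(W.biUnion fun v => G.neighborFinset v) + G.deficiency = #W := by
  obtain ⟨W, -, hW⟩ := exists_mem_eq_sup (univ : Finset (Finset V)) univ_nonempty
    fun W => #W - #(W.biUnion fun v => G.neighborFinset v)
  by_cases hN : #(W.biUnion fun v => G.neighborFinset v) ≤ #W
  · exact ⟨W, by rw [deficiency, hW]; omega⟩
  · exact ⟨∅, by simp [deficiency, hW, Nat.sub_eq_zero_of_le (le_of_not_ge hN)]⟩

end SimpleGraph

namespace IsFracMatching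

variable {V : Type*} [Fintype V] [DecidableEq V] {G : SimpleGraph V} [DecidableRel G.Adj]
  {f : Sym2 V → ℝ}

theorem sum_sum_le_card (hf : IsFracMatching G f) (S : Finset V) :
    ∑ v ∈ S, ∑ u, f s(v, u) ≤ #S := by
  simpa [← G.sum_incidenceFinset_eq_sum hf.2.1] using
    sum_le_card_nsmul S _ 1 fun v _ => hf.2.2 v

theorem two_mul_sum_le (hf : IsFracMatching G f) (W : Finset V) :
    2 * ∑ e ∈ G.edgeFinset, f e
      ≤ Fintype.card V - #W + #(W.biUnion fun v => G.neighborFinset v) := by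
  set N := W.biUnion fun v => G.neighborFinset v
  have hWN : ∑ v ∈ W, ∑ u, f s(v, u) ≤ ∑ u ∈ N, ∑ v, f s(u, v) := calc
    ∑ v ∈ W, ∑ u, f s(v, u) = ∑ v ∈ W, ∑ u ∈ N, f s(v, u) :=
      sum_congr rfl fun v hv => (sum_subset (subset_univ N) fun u _ hu =>
        hf.2.1 _ fun hadj => hu (mem_biUnion.mpr ⟨v, hv, by simpa using hadj⟩)).symm
    _ = ∑ u ∈ N, ∑ v ∈ W, f s(u, v) := by rw [sum_comm]; simp_rw [Sym2.eq_swap]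
    _ ≤ ∑ u ∈ N, ∑ v, f s(u, v) := sum_le_sum fun u _ =>
      sum_le_sum_of_subset_of_nonneg (subset_univ W) fun v _ _ => (hf.1 _).1
  have hN := hf.sum_sum_le_card N
  have hWc := hf.sum_sum_le_card Wᶜ
  rw [card_compl, Nat.cast_sub (card_le_univ W)] at hWc
  have htotal := G.sum_sum_eq_two_nsmul_sum_edgeFinset hf.2.1
  rw [← sum_add_sum_compl W, two_nsmul] at htotal
  linarith

end IsFracMatching

namespace SimpleGraph

variable {V : Type*} {G : SimpleGraph V} {g : V → V → ℝ}

theorem symmetrize_eq_zero_of_notMem_edgeSet (hg : ∀ a b, g a b ≠ 0 → G.Adj a b) :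
    ∀ e ∉ G.edgeSet, Sym2.symmetrize g e = 0 := by
  intro e he
  induction e using Sym2.ind with
  | _ a b =>
    have hab : g a b = 0 := by_contra fun h => he (hg a b h)
    have hba : g b a = 0 := by_contra fun h => he ((hg b a h).symm)
    simp [hab, hba]

variable [Fintype V] [DecidableEq V] [DecidableRel G.Adj]

theorem isFracMatching_symmetrize (hg₀ : ∀ a b, 0 ≤ g a b)
    (hg : ∀ a b, g a b ≠ 0 → G.Adj a b)
    (hrow : ∀ a, ∑ b, g a b ≤ 1) (hcol : ∀ b, ∑ a, g a b ≤ 1) :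
    IsFracMatching G (Sym2.symmetrize g) := by
  refine ⟨fun e => ?_, symmetrize_eq_zero_of_notMem_edgeSet hg, fun v => ?_⟩
  · induction e using Sym2.ind with
    | _ a b =>
      have hab := (single_le_sum (fun b _ => hg₀ a b) (mem_univ b)).trans (hrow a)
      have hba := (single_le_sum (fun c _ => hg₀ c a) (mem_univ b)).trans (hcol a)
      simp only [Sym2.symmetrize_mk]
      constructor <;> linarith [hg₀ a b, hg₀ b a]
  · rw [sum_incidenceFinset_eq_sum (symmetrize_eq_zero_of_notMem_edgeSet hg)]
    simp only [Sym2.symmetrize_mk, ← sum_div, sum_add_distrib]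
    linarith [hrow v, hcol v]

theorem two_mul_sum_symmetrize (hg : ∀ a b, g a b ≠ 0 → G.Adj a b) :
    2 * ∑ e ∈ G.edgeFinset, Sym2.symmetrize g e = ∑ a, ∑ b, g a b := by
  have h := sum_sum_eq_two_nsmul_sum_edgeFinset (symmetrize_eq_zero_of_notMem_edgeSet hg)
  simp only [Sym2.symmetrize_mk, ← sum_div, sum_add_distrib] at h
  rw [sum_comm (f := fun a b => g b a), two_nsmul] at h
  linarith

variable (G)

theorem exists_isFracMatching_card_sub_deficiency_le :
    ∃ f, IsFracMatching G f ∧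
      (Fintype.card V : ℝ) - G.deficiency ≤ 2 * ∑ e ∈ G.edgeFinset, f e := by
  obtain ⟨m, hm, hmN⟩ := exists_injective_of_card_le_card_biUnion_add
    (fun v => G.neighborFinset v) G.deficiency G.card_le_card_biUnion_neighborFinset_add_deficiency
  let g : V → V → ℝ := fun a b => if m a = .inl b then 1 else 0
  have hrow (a : V) : ∑ b, g a b = if (m a).isLeft then 1 else 0 := by
    rcases h : m a with b | j <;> simp [g, h]
  have hcol (b : V) : ∑ a, g a b ≤ 1 := by
    simp only [g, sum_boole]
    exact_mod_cast card_le_one.mpr fun a ha a' ha' => hm (by simp_all)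
  have hg (a b : V) (hab : g a b ≠ 0) : G.Adj a b := by
    simpa using hmN a b (by simpa [g] using hab)
  refine ⟨_, isFracMatching_symmetrize (fun a b => by positivity) hg
    (fun a => by rw [hrow]; split_ifs <;> norm_num) hcol, ?_⟩
  rw [two_mul_sum_symmetrize hg]
  simp only [hrow, sum_boole]
  have : (Fintype.card V : ℝ) ≤ #{a | (m a).isLeft} + G.deficiency := by
    exact_mod_cast hm.card_le_card_filter_isLeft_add
  linarith

end SimpleGraph

theorem IsFracMatchingNumber.two_mul_eq {V : Type*} [Fintype V] [DecidableEq V]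
    {G : SimpleGraph V} [DecidableRel G.Adj] {s : ℝ} (hs : IsFracMatchingNumber G s) :
    2 * s = Fintype.card V - G.deficiency := by
  obtain ⟨⟨f, hf, rfl⟩, hmax⟩ := hs
  obtain ⟨W, hW⟩ := G.exists_card_biUnion_neighborFinset_add_deficiency_eq
  obtain ⟨f', hf', hle⟩ := G.exists_isFracMatching_card_sub_deficiency_le
  have hupper := hf.two_mul_sum_le W
  rw [← hW] at hupper
  push_cast at hupper
  linarith [hmax f' hf']

/-- twice the fractional matching number of any graph is an integer. -/
theorem two_mul_fracMatchingNumber_int {V : Type*} [Fintype V] [DecidableEq V]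
    (G : SimpleGraph V) [DecidableRel G.Adj] (s : ℝ) (hs : IsFracMatchingNumber G s) :
    ∃ k : ℤ, 2 * s = k :=
  ⟨Fintype.card V - G.deficiency, by rw [hs.two_mul_eq]; push_cast; ring⟩
end

section
/- Let n, s, t, δ be positive integers with δ ≤ t ≤ s and n ≥ 2s+1, and let G(n,s,t) be the graph obtained from K_t ∨ (K_{2s−2t} + complement of K_{n+t−2s}) by deleting t − δ edges incident to one common vertex u of the independent part. Then the number of copies of K_ℓ in G(n,s,t) equals C(2s−t, ℓ) + C(t, ℓ−1)·(n + t − 2s − 1) + C(δ, ℓ−1), for any ℓ ≥ 2. -/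
/-!
For `t ≤ s` the first `2s − t` vertices form a clique `A` and the others an independent set,
so `G(n,s,t)` is a split graph. An `ℓ`-clique is then either an `ℓ`-subset of `A` or a vertex
`v ∉ A` together with an `(ℓ−1)`-subset of its neighbourhood, which lies inside `A` and is
therefore itself a clique; hence there are `C(|A|, ℓ) + ∑_{v ∉ A} C(deg v, ℓ−1)` of them.
Outside `A`, the vertex `u` has degree `δ` and the other `n + t − 2s − 1` vertices have degree `t`.
-/

/-- The extremal graph `G(n,s,t)` on vertex set `Fin n`: obtained from
`K_t ∨ (K_{2s−2t} + complement of K_{n+t−2s})` by deleting `t − δ` edges incident to the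
common vertex `u` (the vertex `n−1` of the independent part), so that `u` is joined
exactly to the first `δ` vertices of the `K_t` part.  The first `t` vertices form the
`K_t` part (joined to everything), the next `2s−2t` vertices form the clique
`K_{2s−2t}`, and the remaining `n+t−2s` vertices are independent. -/
def GExt (n s t δ : ℕ) : SimpleGraph (Fin n) where
  Adj i j := i ≠ j ∧
    (((i : ℕ) < 2 * s - t ∧ (j : ℕ) < 2 * s - t) ∨ ((i : ℕ) < t ∨ (j : ℕ) < t)) ∧
    ¬((i : ℕ) = n - 1 ∧ δ ≤ (j : ℕ)) ∧ ¬((j : ℕ) = n - 1 ∧ δ ≤ (i : ℕ))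
  symm := by
    constructor
    intro a b h
    obtain ⟨h1, h2, h3, h4⟩ := h
    exact ⟨h1.symm, by tauto, h4, h3⟩
  loopless := by
    constructor
    intro a h
    exact h.1 rfl

namespace SimpleGraph

open Finset

variable {V : Type*} [Fintype V] [DecidableEq V] {G : SimpleGraph V} [DecidableRel G.Adj]

theorem filter_cliqueFinset_subset_eq_powersetCard {A : Finset V}
    (hA : G.IsClique (A : Set V)) (n : ℕ) :
    {S ∈ G.cliqueFinset n | S ⊆ A} = A.powersetCard n := by
  ext S
  simp only [mem_filter, mem_cliqueFinset_iff, mem_powersetCard, isNClique_iff]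
  exact ⟨fun ⟨⟨_, hcard⟩, hSA⟩ => ⟨hSA, hcard⟩,
    fun ⟨hSA, hcard⟩ => ⟨⟨hA.subset (coe_subset.2 hSA), hcard⟩, hSA⟩⟩

theorem card_filter_mem_cliqueFinset_succ {v : V} (hv : G.IsClique (G.neighborSet v)) (k : ℕ) :
    #{S ∈ G.cliqueFinset (k + 1) | v ∈ S} = (G.degree v).choose k := by
  rw [← card_neighborFinset_eq_degree, ← card_powersetCard]
  refine card_nbij' (fun S => S.erase v) (insert v) ?_ ?_ ?_ ?_
  · intro S hS
    simp only [coe_filter, mem_cliqueFinset_iff, Set.mem_ofPred_eq] at hS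
    obtain ⟨hS, hvS⟩ := hS
    refine mem_powersetCard.2 ⟨fun w hw => ?_, (hS.erase_of_mem hvS).card_eq⟩
    obtain ⟨hwv, hwS⟩ := mem_erase.1 hw
    exact (mem_neighborFinset _ _ _).2 (hS.isClique hvS hwS (Ne.symm hwv))
  · intro P hP
    obtain ⟨hPN, hPk⟩ := mem_powersetCard.1 hP
    have hP : G.IsNClique k P :=
      ⟨hv.subset fun w hw => (mem_neighborFinset _ _ _).1 (hPN hw), hPk⟩
    simp only [coe_filter, mem_cliqueFinset_iff, Set.mem_ofPred_eq]
    exact ⟨hP.insert fun w hw => (mem_neighborFinset _ _ _).1 (hPN hw), mem_insert_self v P⟩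
  · intro S hS
    exact insert_erase (mem_filter.1 hS).2
  · intro P hP
    exact erase_insert fun hvP => G.irrefl ((mem_neighborFinset _ _ _).1
      ((mem_powersetCard.1 hP).1 hvP))

/-- A clique meets an independent set in at most one vertex. -/
theorem card_cliqueFinset_eq_card_filter_subset_add_sum {A : Finset V}
    (hAc : G.IsIndepSet (A : Set V)ᶜ) (n : ℕ) :
    #(G.cliqueFinset n) =
      #{S ∈ G.cliqueFinset n | S ⊆ A} + ∑ v ∈ Aᶜ, #{S ∈ G.cliqueFinset n | v ∈ S} := by
  rw [← card_filter_add_card_filter_not (fun S => S ⊆ A)]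
  congr 1
  have hsplit : {S ∈ G.cliqueFinset n | ¬S ⊆ A} =
      Aᶜ.biUnion fun v => {S ∈ G.cliqueFinset n | v ∈ S} := by
    ext S
    simp only [mem_filter, mem_biUnion, mem_compl, not_subset]
    tauto
  rw [hsplit, card_biUnion]
  intro v hv w hw hvw
  refine Finset.disjoint_left.2 fun S hSv hSw => ?_
  simp only [mem_filter, mem_cliqueFinset_iff] at hSv hSw
  exact hAc (by simpa using hv) (by simpa using hw) hvw
    (hSv.1.isClique hSv.2 hSw.2 hvw)

theorem card_cliqueFinset_succ_of_isClique_of_isIndepSet_compl {A : Finset V}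
    (hA : G.IsClique (A : Set V)) (hAc : G.IsIndepSet (A : Set V)ᶜ) (k : ℕ) :
    #(G.cliqueFinset (k + 1)) = (#A).choose (k + 1) + ∑ v ∈ Aᶜ, (G.degree v).choose k := by
  rw [card_cliqueFinset_eq_card_filter_subset_add_sum hAc,
    filter_cliqueFinset_subset_eq_powersetCard hA, card_powersetCard]
  congr 1
  refine sum_congr rfl fun v hv => card_filter_mem_cliqueFinset_succ (hA.subset ?_) k
  intro w hw
  by_contra hwA
  exact hAc (by simpa using hv) hwA (G.ne_of_adj hw) hw

end SimpleGraph

open Finset SimpleGraph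

section GExt

instance GExt.decidableAdj (n s t δ : ℕ) : DecidableRel (GExt n s t δ).Adj :=
  fun _ _ => inferInstanceAs (Decidable (_ ∧ _))

variable {n s t δ : ℕ}

theorem GExt_isClique (hlt : 2 * s - t < n) :
    (GExt n s t δ).IsClique {i | (i : ℕ) < 2 * s - t} := by
  intro i hi j hj hij
  simp only [Set.mem_ofPred_eq] at hi hj
  exact ⟨hij, Or.inl ⟨hi, hj⟩, by omega, by omega⟩

theorem GExt_isIndepSet (hts : t ≤ s) :
    (GExt n s t δ).IsIndepSet {i | (i : ℕ) < 2 * s - t}ᶜ := by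
  intro i hi j hj _ hadj
  simp only [Set.mem_compl_iff, Set.mem_ofPred_eq] at hi hj
  have := hadj.2.1
  omega

theorem GExt_adj_iff_of_le (hts : t ≤ s) {v w : Fin n} (hv : 2 * s - t ≤ v) :
    (GExt n s t δ).Adj v w ↔ (w : ℕ) < t ∧ ((v : ℕ) = n - 1 → (w : ℕ) < δ) := by
  have := v.2
  simp only [GExt, Fin.ne_iff_vne]
  omega

theorem GExt_degree_of_le (hts : t ≤ s) {v : Fin n} (hv : 2 * s - t ≤ v)
    (hvu : (v : ℕ) ≠ n - 1) :
    (GExt n s t δ).degree v = t := by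
  have hN : (GExt n s t δ).neighborFinset v = ({w | (w : ℕ) < t} : Finset (Fin n)) := by
    ext w
    simp [GExt_adj_iff_of_le hts hv, hvu]
  rw [← card_neighborFinset_eq_degree, hN, Fin.card_filter_val_lt]
  omega

theorem GExt_degree_last (hδt : δ ≤ t) (hts : t ≤ s) {u : Fin n} (hu : (u : ℕ) = n - 1)
    (hlt : 2 * s - t < n) :
    (GExt n s t δ).degree u = δ := by
  have hN : (GExt n s t δ).neighborFinset u = ({w | (w : ℕ) < δ} : Finset (Fin n)) := by
    ext w
    simp only [mem_neighborFinset, GExt_adj_iff_of_le hts (v := u) (by omega), hu, mem_filter,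
      mem_univ, true_and, true_implies]
    omega
  rw [← card_neighborFinset_eq_degree, hN, Fin.card_filter_val_lt]
  omega

end GExt

theorem GExt_clique_count_general (n s t δ ℓ : ℕ) (hδt : δ ≤ t) (hts : t ≤ s) (hn2s : 2 * s + 1 ≤ n)
    (hℓ : 2 ≤ ℓ) :
    ((GExt n s t δ).cliqueSet ℓ).ncard =
      Nat.choose (2 * s - t) ℓ + Nat.choose t (ℓ - 1) * (n + t - 2 * s - 1) +
        Nat.choose δ (ℓ - 1) := by
  obtain ⟨k, rfl⟩ : ∃ k, ℓ = k + 1 := ⟨ℓ - 1, by omega⟩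
  set A : Finset (Fin n) := {i | (i : ℕ) < 2 * s - t}
  have hA : (A : Set (Fin n)) = {i : Fin n | (i : ℕ) < 2 * s - t} := coe_filter_univ _
  have hAcard : #A = 2 * s - t := by
    rw [Fin.card_filter_val_lt]
    omega
  set u : Fin n := ⟨n - 1, by omega⟩
  have hu : u ∈ Aᶜ := by
    simp only [A, u, mem_compl, mem_filter, mem_univ, true_and]
    omega
  have hcard : #(Aᶜ.erase u) = n + t - 2 * s - 1 := by
    rw [card_erase_of_mem hu, card_compl, Fintype.card_fin, hAcard]
    omega
  have hdeg : ∀ v ∈ Aᶜ.erase u, ((GExt n s t δ).degree v).choose k = t.choose k := by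
    intro v hv
    simp only [A, u, mem_erase, mem_compl, mem_filter, mem_univ, true_and, ne_eq,
      Fin.ext_iff] at hv
    rw [GExt_degree_of_le hts (by omega) hv.1]
  rw [← coe_cliqueFinset, Set.ncard_coe_finset,
    card_cliqueFinset_succ_of_isClique_of_isIndepSet_compl (hA ▸ GExt_isClique (by omega))
      (hA ▸ GExt_isIndepSet hts),
    ← add_sum_erase _ _ hu, GExt_degree_last hδt hts rfl (by omega), sum_congr rfl hdeg,
    sum_const, hcard, hAcard, smul_eq_mul, Nat.add_sub_cancel]
  ring

/-- the number of copies of `K_ℓ` in `G(n,s,t)` equals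
`C(2s−t, ℓ) + C(t, ℓ−1)·(n + t − 2s − 1) + C(δ, ℓ−1)`. -/
theorem GExt_clique_count (n s t δ ℓ : ℕ) (hn : 0 < n) (hs : 0 < s) (ht : 0 < t)
    (hδ : 0 < δ) (hδt : δ ≤ t) (hts : t ≤ s) (hn2s : 2 * s + 1 ≤ n) (hℓ : 2 ≤ ℓ) :
    ((GExt n s t δ).cliqueSet ℓ).ncard =
      Nat.choose (2 * s - t) ℓ + Nat.choose t (ℓ - 1) * (n + t - 2 * s - 1) +
        Nat.choose δ (ℓ - 1) :=
  GExt_clique_count_general n s t δ ℓ hδt hts hn2s hℓ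
end

section
/- Let n, s, t, δ be positive integers with δ ≤ t ≤ s, 2s − 2t ≠ 1, and n ≥ 2s+1. Then the graph G(n,s,t), obtained from K_t ∨ (K_{2s−2t} + complement of K_{n+t−2s}) by deleting t − δ edges incident to one common vertex u of the independent part, has fractional matching number exactly s and minimum degree exactly δ. -/
instance (n s t δ : ℕ) : DecidableRel (GExt n s t δ).Adj := fun i j =>
  inferInstanceAs (Decidable (i ≠ j ∧
    (((i : ℕ) < 2 * s - t ∧ (j : ℕ) < 2 * s - t) ∨ ((i : ℕ) < t ∨ (j : ℕ) < t)) ∧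
    ¬((i : ℕ) = n - 1 ∧ δ ≤ (j : ℕ)) ∧ ¬((j : ℕ) = n - 1 ∧ δ ≤ (i : ℕ))))

/-! A matching of size `s` matches `K_t` into the independent part and pairs up consecutive
vertices of `K_{2s-2t}`. Conversely, the weights `1` on `K_t`, `1/2` on `K_{2s-2t}` and `0` on the
independent part cover every edge and sum to `s`, which bounds every fractional matching by weak LP
duality. Every vertex sees at least `δ` of the first `δ + 1` vertices, and `u` sees exactly the
first `δ`. -/

open Finset SimpleGraph

section FractionalMatching

variable {V : Type*} [Fintype V] [DecidableEq V] {G : SimpleGraph V} [DecidableRel G.Adj]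

theorem sum_ite_mem_sym2_mk {M : Type*} [AddCommMonoid M] {a b : V} (hab : a ≠ b) (g : V → M) :
    ∑ v, (if v ∈ s(a, b) then g v else 0) = g a + g b := by
  rw [← sum_filter, show ({v | v ∈ s(a, b)} : Finset V) = {a, b} by ext; simp, sum_pair hab]

theorem IsFracMatching.sum_le_of_cover {f : Sym2 V → ℝ} (hf : IsFracMatching G f) {g : V → ℝ}
    (hg : ∀ v, 0 ≤ g v) (hcover : ∀ a b, G.Adj a b → 1 ≤ g a + g b) :
    ∑ e ∈ G.edgeFinset, f e ≤ ∑ v, g v := by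
  obtain ⟨hf01, -, hfv⟩ := hf
  calc ∑ e ∈ G.edgeFinset, f e
      ≤ ∑ e ∈ G.edgeFinset, (∑ v, if v ∈ e then g v else 0) * f e := by
        refine sum_le_sum fun e he => le_mul_of_one_le_left (hf01 e).1 ?_
        induction e using Sym2.ind with
        | h a b =>
          rw [mem_edgeFinset, mem_edgeSet] at he
          rw [sum_ite_mem_sym2_mk he.ne]
          exact hcover a b he
    _ = ∑ v, g v * ∑ e ∈ G.incidenceFinset v, f e := by
        simp only [incidenceFinset_eq_filter, mul_sum, sum_mul, sum_filter, ite_mul, zero_mul,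
          mul_ite, mul_zero]
        exact sum_comm
    _ ≤ ∑ v, g v := sum_le_sum fun v _ => mul_le_of_le_one_right (hg v) (hfv v)

theorem exists_isFracMatching_sum_eq_card {ι : Type*} [Fintype ι] (a b : ι → V)
    (hadj : ∀ i, G.Adj (a i) (b i))
    (hdisj : ∀ i j v, v ∈ s(a i, b i) → v ∈ s(a j, b j) → i = j) :
    ∃ f, IsFracMatching G f ∧ ∑ e ∈ G.edgeFinset, f e = Fintype.card ι := by
  classical
  set M := univ.image fun i => s(a i, b i)
  have hM : M ⊆ G.edgeFinset := by
    simp only [M, image_subset_iff, mem_edgeFinset, mem_edgeSet]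
    exact fun i _ => hadj i
  have hinj : Function.Injective fun i => s(a i, b i) := fun i j h =>
    hdisj i j (a i) (Sym2.mem_mk_left _ _) ((congrArg (a i ∈ ·) h).mp (Sym2.mem_mk_left _ _))
  refine ⟨fun e => if e ∈ M then 1 else 0, ⟨fun e => by dsimp only; split_ifs <;> norm_num,
    fun e he => if_neg fun h => he (mem_edgeFinset.mp (hM h)), fun v => ?_⟩, ?_⟩
  · rw [sum_boole, Nat.cast_le_one, card_le_one]
    simp only [mem_filter, mem_incidenceFinset, M, mem_image, mem_univ, true_and]
    rintro _ ⟨hv, i, rfl⟩ _ ⟨hv', j, rfl⟩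
    rw [hdisj i j v hv.2 hv'.2]
  · rw [sum_boole, filter_mem_eq_inter, inter_eq_right.mpr hM, card_image_of_injective _ hinj,
      card_univ]

end FractionalMatching

theorem SimpleGraph.ncard_neighborSet {V : Type*} [Fintype V] (G : SimpleGraph V)
    [DecidableRel G.Adj] (v : V) : (G.neighborSet v).ncard = G.degree v := by
  rw [← Nat.card_coe_set_eq, Nat.card_eq_fintype_card, card_neighborSet_eq_degree]

namespace GExt

variable {n s t δ : ℕ}

theorem adj_iff {i j : Fin n} : (GExt n s t δ).Adj i j ↔ (i : ℕ) ≠ j ∧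
    (((i : ℕ) < 2 * s - t ∧ (j : ℕ) < 2 * s - t) ∨ ((i : ℕ) < t ∨ (j : ℕ) < t)) ∧
    ¬((i : ℕ) = n - 1 ∧ δ ≤ (j : ℕ)) ∧ ¬((j : ℕ) = n - 1 ∧ δ ≤ (i : ℕ)) := by
  rw [← Fin.ne_iff_vne]
  rfl

def matchingFst (t : ℕ) (hn : 2 * s + 1 ≤ n) (k : Fin s) : Fin n :=
  ⟨if (k : ℕ) < t then k else 2 * k - t, by split_ifs <;> omega⟩

def matchingSnd (t : ℕ) (hn : 2 * s + 1 ≤ n) (k : Fin s) : Fin n :=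
  ⟨if (k : ℕ) < t then 2 * s - t + k else 2 * k - t + 1, by split_ifs <;> omega⟩

theorem adj_matchingFst_matchingSnd (hts : t ≤ s) (hn : 2 * s + 1 ≤ n)
    (k : Fin s) : (GExt n s t δ).Adj (matchingFst t hn k) (matchingSnd t hn k) := by
  rw [adj_iff]
  simp only [matchingFst, matchingSnd]
  split_ifs <;> omega

theorem eq_of_mem_matchingEdge (hts : t ≤ s) (hn : 2 * s + 1 ≤ n) {i j : Fin s} {v : Fin n}
    (hi : v ∈ s(matchingFst t hn i, matchingSnd t hn i))
    (hj : v ∈ s(matchingFst t hn j, matchingSnd t hn j)) : i = j := by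
  simp only [Sym2.mem_iff, Fin.ext_iff, matchingFst, matchingSnd] at hi hj
  ext
  split_ifs at hi hj <;> omega

noncomputable def cover (s t : ℕ) (v : Fin n) : ℝ :=
  ((if (v : ℕ) < t then 1 else 0) + (if (v : ℕ) < 2 * s - t then 1 else 0)) / 2

theorem cover_nonneg (v : Fin n) : 0 ≤ cover s t v := by
  unfold cover
  positivity

theorem one_le_cover_add_cover (hts : t ≤ s) {a b : Fin n} (hab : (GExt n s t δ).Adj a b) :
    1 ≤ cover s t a + cover s t b := by
  rw [adj_iff] at hab
  unfold cover
  split_ifs <;> norm_num <;> omega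

theorem sum_cover (hts : t ≤ s) (hn : 2 * s ≤ n) : ∑ v : Fin n, cover s t v = s := by
  simp only [cover, ← sum_div, sum_add_distrib, sum_boole, Fin.card_filter_val_lt,
    min_eq_right (show t ≤ n by omega), min_eq_right (show 2 * s - t ≤ n by omega)]
  rw [Nat.cast_sub (by omega)]
  push_cast
  ring

theorem le_degree (hδt : δ ≤ t) (hts : t ≤ s) (hn : 2 * s + 1 ≤ n) (v : Fin n) :
    δ ≤ (GExt n s t δ).degree v := by
  let d : Fin n := ⟨δ, by omega⟩
  by_cases hv : (v : ℕ) < δ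
  · calc δ = #((Iic d).erase v) := by
          rw [card_erase_of_mem (mem_Iic.mpr (Fin.le_def.mpr hv.le)), Fin.card_Iic]; rfl
      _ ≤ _ := card_le_card fun j hj => by
          rw [mem_erase, mem_Iic, Fin.le_def, Ne, Fin.ext_iff] at hj
          rw [mem_neighborFinset, adj_iff]
          simp only [d] at hj
          omega
  · calc δ = #(Iio d) := (Fin.card_Iio d).symm
      _ ≤ _ := card_le_card fun j hj => by
          rw [mem_Iio, Fin.lt_def] at hj
          rw [mem_neighborFinset, adj_iff]
          simp only [d] at hj
          omega

theorem degree_last (hδt : δ ≤ t) (hts : t ≤ s) (hn : 2 * s + 1 ≤ n) :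
    (GExt n s t δ).degree ⟨n - 1, by omega⟩ = δ := by
  rw [← card_neighborFinset_eq_degree]
  calc _ = #(Iio (⟨δ, by omega⟩ : Fin n)) := by
        congr 1
        ext j
        simp only [mem_neighborFinset, adj_iff, mem_Iio, Fin.lt_def, true_and]
        omega
    _ = δ := Fin.card_Iio _

end GExt

theorem GExt_fracMatchingNumber_minDegree_general (n s t δ : ℕ) (hδt : δ ≤ t) (hts : t ≤ s)
    (hn2s : 2 * s + 1 ≤ n) :
    IsFracMatchingNumber (GExt n s t δ) (s : ℝ) ∧
      (∀ v : Fin n, δ ≤ ((GExt n s t δ).neighborSet v).ncard) ∧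
      (∃ v : Fin n, ((GExt n s t δ).neighborSet v).ncard = δ) := by
  simp only [ncard_neighborSet]
  refine ⟨⟨?_, fun f hf => ?_⟩, GExt.le_degree hδt hts hn2s, ⟨_, GExt.degree_last hδt hts hn2s⟩⟩
  · simpa using exists_isFracMatching_sum_eq_card (G := GExt n s t δ) _ _
      (GExt.adj_matchingFst_matchingSnd hts hn2s)
      fun _ _ _ => GExt.eq_of_mem_matchingEdge hts hn2s
  · calc _ ≤ ∑ v, GExt.cover s t v :=
          hf.sum_le_of_cover GExt.cover_nonneg fun _ _ => GExt.one_le_cover_add_cover hts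
      _ = s := GExt.sum_cover hts (by omega)

/-- for positive integers `δ ≤ t ≤ s` with `2s − 2t ≠ 1` and `n ≥ 2s+1`,
the graph `G(n,s,t)` has fractional matching number exactly `s` and minimum degree
exactly `δ`. -/
theorem GExt_fracMatchingNumber_minDegree (n s t δ : ℕ) (hn : 0 < n) (hs : 0 < s)
    (ht : 0 < t) (hδ : 0 < δ) (hδt : δ ≤ t) (hts : t ≤ s) (hodd : 2 * s - 2 * t ≠ 1)
    (hn2s : 2 * s + 1 ≤ n) :
    IsFracMatchingNumber (GExt n s t δ) (s : ℝ) ∧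
      (∀ v : Fin n, δ ≤ ((GExt n s t δ).neighborSet v).ncard) ∧
      (∃ v : Fin n, ((GExt n s t δ).neighborSet v).ncard = δ) :=
  GExt_fracMatchingNumber_minDegree_general n s t δ hδt hts hn2s
end

section
/- Let n, 2s, δ, ℓ be positive integers with n ≥ 2s+1 ≥ 5, ℓ ≥ 2, and suppose 2s is even. If G is a graph of order n with fractional matching number s and minimum degree δ, then the number of copies of K_ℓ in G is at most max(g_ℓ(n,s,δ), g_ℓ(n,s,s)), where g_ℓ(n,s,t) = C(2s−t, ℓ) + C(t, ℓ−1)·(n + t − 2s − 1) + C(δ, ℓ−1). -/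
/-!
Since every fractional matching has weight at most `s`, Hall's theorem (with deficiency
`n - 2s - 1`, applied to the neighbourhoods) yields an independent set `I` whose neighbourhood
`T = N(I)` satisfies `n + |T| ≤ 2s + |I|`; the half-weighted edges of a Hall matching would
otherwise form a fractional matching of weight `> s`.

Fix a vertex `v` of minimum degree `δ`. An `ℓ`-clique either contains `v` (at most
`C(δ, ℓ-1)` of these), or avoids `v` and `I`, or avoids `v` and meets `I` in a vertex `u`,
its other vertices lying in `N(u) \ {v} ⊆ T`. Counting these three kinds gives
`g_ℓ(n, s, |T|)`, and since `δ ≤ |T| ≤ s` and `g_ℓ(n, s, t)` is convex in `t`,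
the bound is at most the larger of its values at `t = δ` and `t = s`.
-/

open Finset

namespace Nat

lemma mul_choose_add_choose_succ_le {t k : ℕ} (a j : ℕ) (htk : t ≤ k) :
    a * t.choose j + k.choose (j + 1) ≤ (k + a).choose (j + 1) := by
  induction a with
  | zero => simp
  | succ a ih =>
    have hmono : t.choose j ≤ (k + a).choose j := choose_le_choose _ (by omega)
    calc (a + 1) * t.choose j + k.choose (j + 1)
        = t.choose j + (a * t.choose j + k.choose (j + 1)) := by ring
      _ ≤ (k + a).choose j + (k + a).choose (j + 1) := add_le_add hmono ih
      _ = (k + (a + 1)).choose (j + 1) := (choose_succ_succ' (k + a) j).symm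

lemma choose_succ_add_mul_choose_le {k t' t m N e : ℕ} (j : ℕ) (htk : t' ≤ k) (htt : t' ≤ t)
    (hkt : k + t ≤ N) (hm : m + k ≤ N - t + e) :
    k.choose (j + 1) + m * t'.choose j ≤ (N - t).choose (j + 1) + t.choose j * e := by
  obtain ⟨a, hN, hm'⟩ : ∃ a, N - t = k + a ∧ m ≤ a + e := ⟨N - t - k, by omega, by omega⟩
  have hmono : t'.choose j ≤ t.choose j := choose_le_choose _ htt
  calc k.choose (j + 1) + m * t'.choose j
      ≤ k.choose (j + 1) + (a * t'.choose j + e * t.choose j) := by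
        gcongr
        calc m * t'.choose j ≤ (a + e) * t'.choose j := by gcongr
          _ ≤ a * t'.choose j + e * t.choose j := by rw [add_mul]; gcongr
    _ = (a * t'.choose j + k.choose (j + 1)) + t.choose j * e := by ring
    _ ≤ (k + a).choose (j + 1) + t.choose j * e := by
        gcongr; exact mul_choose_add_choose_succ_le a j htk
    _ = (N - t).choose (j + 1) + t.choose j * e := by rw [hN]

end Nat

lemma two_mul_gcl_add_one_le {n s δ r x : ℕ} (hn : 2 * s + 1 ≤ n) (hx : x + 2 ≤ 2 * s) :
    2 * gcl n s δ (r + 2) (x + 1) ≤ gcl n s δ (r + 2) x + gcl n s δ (r + 2) (x + 2) := by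
  obtain ⟨c, hc⟩ : ∃ c, n = 2 * s + 1 + c := ⟨n - (2 * s + 1), by omega⟩
  obtain ⟨y, hy⟩ : ∃ y, 2 * s = x + 2 + y := ⟨2 * s - (x + 2), by omega⟩
  simp only [gcl, show r + 2 - 1 = r + 1 from rfl]
  rw [show 2 * s - x = y + 2 by omega, show 2 * s - (x + 1) = y + 1 by omega,
    show 2 * s - (x + 2) = y by omega, show n + x - 2 * s - 1 = c + x by omega,
    show n + (x + 1) - 2 * s - 1 = c + x + 1 by omega,
    show n + (x + 2) - 2 * s - 1 = c + x + 2 by omega]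
  have p1 := Nat.choose_succ_succ' y (r + 1)
  have p2 := Nat.choose_succ_succ' (y + 1) (r + 1)
  have p3 := Nat.choose_succ_succ' x r
  have p4 := Nat.choose_succ_succ' (x + 1) r
  have q1 : y.choose (r + 1) ≤ (y + 1).choose (r + 1) := Nat.choose_le_choose _ (by omega)
  have q2 : x.choose r * (c + x + 2) ≤ (x + 1).choose r * (c + x + 2) :=
    Nat.mul_le_mul_right _ (Nat.choose_le_choose _ (by omega))
  nlinarith

lemma le_max_of_convex_of_mem_Icc (h : ℕ → ℕ) {a b : ℕ}
    (hconv : ∀ x, a ≤ x → x + 2 ≤ b → 2 * h (x + 1) ≤ h x + h (x + 2))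
    {t : ℕ} (hat : a ≤ t) (htb : t ≤ b) : h t ≤ max (h a) (h b) := by
  by_cases hdec : ∀ x, a ≤ x → x + 1 ≤ t → h (x + 1) ≤ h x
  · have : AntitoneOn h (Set.Icc a t) :=
      antitoneOn_of_add_one_le Set.ordConnected_Icc fun x _ hx hx1 => hdec x hx.1 hx1.2
    exact le_max_of_le_left (this ⟨le_rfl, hat⟩ ⟨hat, le_rfl⟩ hat)
  · push Not at hdec
    obtain ⟨x, hax, hxt, hlt⟩ := hdec
    -- once `h` increases, convexity keeps it increasing up to `b`
    have hinc : ∀ y, x ≤ y → y + 1 ≤ b → h y ≤ h (y + 1) := by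
      intro y hy
      induction y, hy using Nat.le_induction with
      | base => exact fun _ => hlt.le
      | succ y hy ih =>
        intro hyb
        show h (y + 1) ≤ h (y + 2)
        have := hconv y (hax.trans hy) (by omega)
        have := ih (by omega)
        omega
    have : MonotoneOn h (Set.Icc x b) :=
      monotoneOn_of_le_add_one Set.ordConnected_Icc fun y _ hy hy1 => hinc y hy.1 hy1.2
    exact le_max_of_le_right (this ⟨by omega, htb⟩ ⟨by omega, le_rfl⟩ htb)

lemma Finset.card_le_choose_of_forall_erase_subset {α : Type*} [DecidableEq α]
    {𝒜 : Finset (Finset α)} (u : α) {S : Finset α} {j : ℕ}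
    (h : ∀ C ∈ 𝒜, u ∈ C ∧ #C = j + 1 ∧ C.erase u ⊆ S) : #𝒜 ≤ (#S).choose j := by
  rw [← card_powersetCard]
  refine card_le_card_of_injOn (·.erase u) (fun C hC => ?_) (fun C₁ h₁ C₂ h₂ he => ?_)
  · obtain ⟨huC, hcard, hsub⟩ := h C hC
    exact mem_powersetCard.2 ⟨hsub, by rw [card_erase_of_mem huC, hcard, Nat.add_sub_cancel]⟩
  · rw [← insert_erase (h C₁ h₁).1, ← insert_erase (h C₂ h₂).1]
    exact congrArg (insert u) he

lemma Fintype.sum_ite_apply_eq_le {ι α : Type*} [Fintype ι] [DecidableEq α] {φ : ι → α}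
    (hφ : Function.Injective φ) (x : α) {c : ℝ} (hc : 0 ≤ c) :
    ∑ i, (if φ i = x then c else 0) ≤ c := by
  calc ∑ i, (if φ i = x then c else 0)
      = ∑ y ∈ univ.map ⟨φ, hφ⟩, if y = x then c else 0 :=
        (Finset.sum_map univ ⟨φ, hφ⟩ fun y => if y = x then c else 0).symm
    _ ≤ c := by rw [Finset.sum_ite_eq']; split_ifs <;> simp [hc]

lemma Finset.exists_injective_of_card_le_card_biUnion_add_s15 {ι α : Type*} [Fintype ι]
    [DecidableEq α] (t : ι → Finset α) (d : ℕ) (h : ∀ A : Finset ι, #A ≤ #(A.biUnion t) + d) :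
    ∃ W : Finset ι, Fintype.card ι ≤ #W + d ∧
      ∃ g : W → α, Function.Injective g ∧ ∀ i : W, g i ∈ t i := by
  -- pad every `t i` with the same `d` dummy elements, then apply Hall's theorem
  obtain ⟨f, hf, hft⟩ := (all_card_le_biUnion_card_iff_exists_injective
      fun i => (t i).disjSum (univ : Finset (Fin d))).1 fun A => by
    rcases A.eq_empty_or_nonempty with rfl | ⟨a, ha⟩
    · simp
    calc #A ≤ #((A.biUnion t).disjSum (univ : Finset (Fin d))) := by simpa using h A
      _ ≤ _ := card_le_card fun x hx => by
        rcases x with x | x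
        · obtain ⟨i, hi, hx⟩ := mem_biUnion.1 (inl_mem_disjSum.1 hx)
          exact mem_biUnion.2 ⟨i, hi, inl_mem_disjSum.2 hx⟩
        · exact mem_biUnion.2 ⟨a, ha, inr_mem_disjSum.2 (mem_univ x)⟩
  set W := univ.filter fun i => (f i).isLeft
  have hdummy : #(univ.filter fun i => ¬(f i).isLeft) ≤ d := by
    calc _ ≤ #((∅ : Finset α).disjSum (univ : Finset (Fin d))) := by
          refine card_le_card_of_injOn f (fun i hi => ?_) hf.injOn
          obtain ⟨b, hb⟩ := Sum.not_isLeft.1 (mem_filter.1 hi).2 |> Sum.isRight_iff.1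
          simp [hb]
      _ = d := by simp
  refine ⟨W, ?_, fun i => (f i).getLeft (mem_filter.1 i.2).2, fun i j hij => ?_, fun i => ?_⟩
  · rw [← card_univ, ← card_filter_add_card_filter_not (s := univ) fun i => (f i).isLeft]
    exact Nat.add_le_add_left hdummy _
  · apply Subtype.ext (hf _)
    rw [← Sum.inl_getLeft (f i) (mem_filter.1 i.2).2, ← Sum.inl_getLeft (f j) (mem_filter.1 j.2).2]
    exact congrArg Sum.inl hij
  · have := hft i
    rwa [← Sum.inl_getLeft (f i) (mem_filter.1 i.2).2, inl_mem_disjSum] at this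

namespace SimpleGraph

variable {V : Type*} [Fintype V] [DecidableEq V] {G : SimpleGraph V} [DecidableRel G.Adj]

lemma IsClique.erase_subset_neighborFinset {C : Finset V} (hC : G.IsClique (C : Set V))
    {u : V} (hu : u ∈ C) : C.erase u ⊆ G.neighborFinset u := fun _ hw =>
  (mem_neighborFinset ..).2 (hC hu (mem_erase.1 hw).2 (mem_erase.1 hw).1.symm)

lemma IsIndepSet.biUnion_neighborFinset_subset_compl {I : Finset V}
    (hI : G.IsIndepSet (I : Set V)) : I.biUnion (G.neighborFinset ·) ⊆ Iᶜ := fun w hw => by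
  obtain ⟨u, huI, huw⟩ := mem_biUnion.1 hw
  rw [mem_neighborFinset] at huw
  exact mem_compl.2 fun hwI => hI huI hwI huw.ne huw

lemma card_cliqueFinset_succ_le (v : V) (I : Finset V) (j : ℕ) :
    #(G.cliqueFinset (j + 1)) ≤ (G.degree v).choose j + (#(Iᶜ.erase v)).choose (j + 1) +
      #(I.erase v) * (#((I.biUnion (G.neighborFinset ·)).erase v)).choose j := by
  set 𝒦 := G.cliqueFinset (j + 1)
  set T := (I.biUnion (G.neighborFinset ·)).erase v
  have hcover : 𝒦 ⊆ {C ∈ 𝒦 | v ∈ C} ∪ powersetCard (j + 1) (Iᶜ.erase v) ∪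
      (I.erase v).biUnion fun u => {C ∈ 𝒦 | u ∈ C ∧ v ∉ C} := by
    intro C hC
    by_cases hv : v ∈ C
    · simp [hC, hv]
    by_cases hI : ∃ u ∈ C, u ∈ I
    · obtain ⟨u, huC, huI⟩ := hI
      refine mem_union_right _ (mem_biUnion.2 ⟨u, mem_erase.2 ⟨?_, huI⟩, ?_⟩)
      · rintro rfl; exact hv huC
      · simp [hC, huC, hv]
    · refine mem_union_left _ (mem_union_right _ (mem_powersetCard.2 ⟨fun w hw => ?_, ?_⟩))
      · exact mem_erase.2 ⟨fun h => hv (h ▸ hw), mem_compl.2 fun hwI => hI ⟨w, hw, hwI⟩⟩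
      · exact (mem_cliqueFinset_iff.1 hC).2
  have hv : #{C ∈ 𝒦 | v ∈ C} ≤ (G.degree v).choose j := by
    rw [← card_neighborFinset_eq_degree]
    refine card_le_choose_of_forall_erase_subset v fun C hC => ?_
    obtain ⟨hC, hvC⟩ := mem_filter.1 hC
    have hC := mem_cliqueFinset_iff.1 hC
    exact ⟨hvC, hC.2, hC.1.erase_subset_neighborFinset hvC⟩
  have hI : ∀ u ∈ I.erase v, #{C ∈ 𝒦 | u ∈ C ∧ v ∉ C} ≤ (#T).choose j := by
    intro u hu
    refine card_le_choose_of_forall_erase_subset u fun C hC => ?_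
    obtain ⟨hC, huC, hvC⟩ := mem_filter.1 hC
    have hC := mem_cliqueFinset_iff.1 hC
    refine ⟨huC, hC.2, fun w hw => mem_erase.2 ⟨fun h => hvC (h ▸ (mem_erase.1 hw).2), ?_⟩⟩
    exact mem_biUnion.2 ⟨u, (mem_erase.1 hu).2, hC.1.erase_subset_neighborFinset huC hw⟩
  calc #𝒦 ≤ #{C ∈ 𝒦 | v ∈ C} + #(powersetCard (j + 1) (Iᶜ.erase v)) +
        ∑ u ∈ I.erase v, #{C ∈ 𝒦 | u ∈ C ∧ v ∉ C} :=
        (card_le_card hcover).trans <| (card_union_le _ _).trans <|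
          add_le_add (card_union_le _ _) card_biUnion_le
    _ ≤ _ := by
      rw [card_powersetCard]
      gcongr
      simpa using sum_le_card_nsmul _ _ _ hI

lemma card_cliqueFinset_le_gcl {s : ℕ} (j : ℕ) (v : V) {I : Finset V}
    (hI : G.IsIndepSet (I : Set V))
    (hIs : Fintype.card V + #(I.biUnion (G.neighborFinset ·)) ≤ 2 * s + #I) :
    #(G.cliqueFinset (j + 1)) ≤
      gcl (Fintype.card V) s (G.degree v) (j + 1) #(I.biUnion (G.neighborFinset ·)) := by
  have hcount := card_cliqueFinset_succ_le (G := G) v I j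
  have hTI := hI.biUnion_neighborFinset_subset_compl
  set T := I.biUnion (G.neighborFinset ·)
  have hsplit : #(I.erase v) + #(Iᶜ.erase v) = Fintype.card V - 1 := by
    rw [← card_union_of_disjoint (disjoint_compl_right.mono (erase_subset _ _) (erase_subset _ _)),
      ← erase_union_distrib, union_compl, card_erase_of_mem (mem_univ v), card_univ]
  have hK : #Iᶜ + #I = Fintype.card V := by rw [card_compl]; have := card_le_univ I; omega
  have harith := Nat.choose_succ_add_mul_choose_le (N := 2 * s)
    (e := Fintype.card V + #T - 2 * s - 1) (m := #(I.erase v)) j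
    (card_le_card (erase_subset_erase v hTI)) card_erase_le
    (by have := card_le_card (erase_subset v Iᶜ); omega) (by omega)
  simp only [gcl, Nat.add_sub_cancel]
  omega

lemma exists_isFracMatching_of_injective {W : Finset V} {g : W → V}
    (hg : Function.Injective g) (hadj : ∀ v : W, G.Adj v (g v)) :
    ∃ f, IsFracMatching G f ∧ ∑ e ∈ G.edgeFinset, f e = #W / 2 := by
  set f : Sym2 V → ℝ := fun e => ∑ v : W, if s(↑v, g v) = e then 1 / 2 else 0
  have hsum (S : Finset (Sym2 V)) :
      ∑ e ∈ S, f e = ∑ v : W, if s(↑v, g v) ∈ S then 1 / 2 else 0 := by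
    rw [sum_comm]
    exact sum_congr rfl fun v _ => sum_ite_eq _ _ _
  have hnonneg (e : Sym2 V) : 0 ≤ f e := sum_nonneg fun _ _ => by split_ifs <;> norm_num
  have hoff (e : Sym2 V) (he : e ∉ G.edgeSet) : f e = 0 :=
    sum_eq_zero fun v _ => if_neg fun h : s(↑v, g v) = e => he (h ▸ hadj v)
  -- a vertex `x` lies on `s(v, g v)` only if `x = v` or `x = g v`, each for at most one `v`
  have hvertex (x : V) : ∑ e ∈ G.incidenceFinset x, f e ≤ 1 := by
    rw [hsum]
    calc ∑ v : W, (if s(↑v, g v) ∈ G.incidenceFinset x then (1 / 2 : ℝ) else 0)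
        ≤ ∑ v : W, ((if (v : V) = x then 1 / 2 else 0) + if g v = x then 1 / 2 else 0) := by
          refine sum_le_sum fun v _ => ?_
          by_cases h : s(↑v, g v) ∈ G.incidenceFinset x
          · rcases Sym2.mem_iff.1 ((mem_incidenceFinset ..).1 h).2 with rfl | rfl
            · simp only [h, ↓reduceIte, le_add_iff_nonneg_right]; positivity
            · simp only [h, ↓reduceIte, le_add_iff_nonneg_left]; positivity
          · rw [if_neg h]
            split_ifs <;> norm_num
      _ ≤ 1 / 2 + 1 / 2 := by
          rw [sum_add_distrib]
          gcongr
          exacts [Fintype.sum_ite_apply_eq_le Subtype.val_injective x (by norm_num),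
            Fintype.sum_ite_apply_eq_le hg x (by norm_num)]
      _ = 1 := by norm_num
  refine ⟨f, ⟨fun e => ⟨hnonneg e, ?_⟩, hoff, hvertex⟩, ?_⟩
  · by_cases he : e ∈ G.edgeSet
    · induction e using Sym2.inductionOn with
      | hf x y =>
        calc f s(x, y) ≤ ∑ e ∈ G.incidenceFinset x, f e :=
              single_le_sum (fun e _ => hnonneg e)
                ((mem_incidenceFinset ..).2 ⟨he, Sym2.mem_mk_left x y⟩)
          _ ≤ 1 := hvertex x
    · rw [hoff e he]; norm_num
  · rw [hsum, Finset.sum_congr rfl fun v _ => if_pos (mem_edgeFinset.2 (hadj v))]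
    rw [sum_const, card_univ, Fintype.card_coe, nsmul_eq_mul]
    ring

lemma exists_card_add_card_biUnion_neighborFinset_le {s : ℕ}
    (hs : ∀ f, IsFracMatching G f → ∑ e ∈ G.edgeFinset, f e ≤ s) :
    ∃ A : Finset V, Fintype.card V + #(A.biUnion (G.neighborFinset ·)) ≤ 2 * s + #A := by
  by_contra! hA
  have hV : 2 * s < Fintype.card V := by simpa using hA ∅
  obtain ⟨W, hW, g, hg, hgN⟩ := exists_injective_of_card_le_card_biUnion_add_s15
    (G.neighborFinset ·) (Fintype.card V - (2 * s + 1)) fun A => by have := hA A; omega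
  obtain ⟨f, hf, hfW⟩ :=
    exists_isFracMatching_of_injective hg fun v => (mem_neighborFinset ..).1 (hgN v)
  have : (#W : ℝ) ≤ 2 * s := by linarith [hs f hf]
  have : #W ≤ 2 * s := by exact_mod_cast this
  omega

lemma exists_isIndepSet_card_add_card_biUnion_neighborFinset_le {s : ℕ}
    (hs : ∀ f, IsFracMatching G f → ∑ e ∈ G.edgeFinset, f e ≤ s) :
    ∃ I : Finset V, G.IsIndepSet (I : Set V) ∧
      Fintype.card V + #(I.biUnion (G.neighborFinset ·)) ≤ 2 * s + #I := by
  obtain ⟨A, hA⟩ := exists_card_add_card_biUnion_neighborFinset_le hs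
  set N := A.biUnion (G.neighborFinset ·)
  refine ⟨A \ N, fun x hx y hy _ hxy => ?_, ?_⟩
  · exact (mem_sdiff.1 hy).2 (mem_biUnion.2 ⟨x, (mem_sdiff.1 hx).1, (mem_neighborFinset ..).2 hxy⟩)
  -- `A \ N` loses the vertices of `A ∩ N`, but so does its neighbourhood
  have hN : (A \ N).biUnion (G.neighborFinset ·) ⊆ N \ A := fun z hz => by
    obtain ⟨x, hx, hxz⟩ := mem_biUnion.1 hz
    rw [mem_neighborFinset] at hxz
    refine mem_sdiff.2 ⟨mem_biUnion.2 ⟨x, (mem_sdiff.1 hx).1, (mem_neighborFinset ..).2 hxz⟩,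
      fun hzA => (mem_sdiff.1 hx).2 (mem_biUnion.2 ⟨z, hzA, (mem_neighborFinset ..).2 hxz.symm⟩)⟩
  have := card_le_card hN
  have := card_sdiff_add_card_inter A N
  have := card_sdiff_add_card_inter N A
  rw [inter_comm] at this
  omega

end SimpleGraph

theorem max_cliques_even_general {V : Type*} [Fintype V] [DecidableEq V] (G : SimpleGraph V)
    [DecidableRel G.Adj] (n s δ ℓ : ℕ) (hn : Fintype.card V = n)
    (hℓ : 2 ≤ ℓ) (hn2s : 2 * s + 1 ≤ n)
    (hfm : IsFracMatchingNumber G (s : ℝ))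
    (hmin : (∀ v : V, δ ≤ (G.neighborSet v).ncard) ∧
      ∃ v : V, (G.neighborSet v).ncard = δ) :
    (G.cliqueSet ℓ).ncard ≤ max (gcl n s δ ℓ δ) (gcl n s δ ℓ s) := by
  obtain ⟨r, rfl⟩ : ∃ r, ℓ = r + 2 := ⟨ℓ - 2, by omega⟩
  have hdeg (u : V) : (G.neighborSet u).ncard = G.degree u := by
    rw [← G.card_neighborFinset_eq_degree, ← Set.ncard_coe_finset, G.coe_neighborFinset]
  obtain ⟨v, hv⟩ := hmin.2
  obtain ⟨I, hI, hIs⟩ :=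
    SimpleGraph.exists_isIndepSet_card_add_card_biUnion_neighborFinset_le hfm.2
  have hTI := card_le_card hI.biUnion_neighborFinset_subset_compl
  set T := I.biUnion (G.neighborFinset ·)
  have hTs : #T ≤ s := by
    have := card_le_univ I
    rw [card_compl] at hTI
    omega
  have hδT : δ ≤ #T := by
    obtain ⟨u, hu⟩ : I.Nonempty := card_pos.1 (by omega)
    calc δ ≤ G.degree u := hdeg u ▸ hmin.1 u
      _ ≤ #T := G.card_neighborFinset_eq_degree u ▸
          card_le_card (subset_biUnion_of_mem (G.neighborFinset ·) hu)
  have hcliques := SimpleGraph.card_cliqueFinset_le_gcl (r + 1) v hI hIs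
  rw [hn, ← hdeg, hv] at hcliques
  rw [← G.coe_cliqueFinset, Set.ncard_coe_finset]
  exact hcliques.trans <| le_max_of_convex_of_mem_Icc _
    (fun x _ hx => two_mul_gcl_add_one_le hn2s (by omega)) hδT hTs

/-- main theorem, `2s` even: if `G` has order `n ≥ 2s+1 ≥ 5`,
fractional matching number `s` (a positive integer) and minimum degree `δ`, then the
number of `ℓ`-cliques of `G` is at most `max(g_ℓ(n,s,δ), g_ℓ(n,s,s))`. -/
theorem max_cliques_even {V : Type*} [Fintype V] [DecidableEq V] (G : SimpleGraph V)
    [DecidableRel G.Adj] (n s δ ℓ : ℕ) (hn : Fintype.card V = n) (hδ : 0 < δ)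
    (hℓ : 2 ≤ ℓ) (hn2s : 2 * s + 1 ≤ n) (h5 : 5 ≤ 2 * s + 1)
    (hfm : IsFracMatchingNumber G (s : ℝ))
    (hmin : (∀ v : V, δ ≤ (G.neighborSet v).ncard) ∧
      ∃ v : V, (G.neighborSet v).ncard = δ) :
    (G.cliqueSet ℓ).ncard ≤ max (gcl n s δ ℓ δ) (gcl n s δ ℓ s) :=
  max_cliques_even_general G n s δ ℓ hn hℓ hn2s hfm hmin
end

section
/- Let n, s, t, r₁, r₂ be positive integers with r = r₁ + r₂, δ ≤ t ≤ s, n ≥ 2s+1, and r₁ ≠ r₂. The number of copies of K_{r₁,r₂} in the graph G(n,s,t) equals Σ_{j=1,2} C(t, r_j)·(C(n−r_j−1, r−r_j) − C(2s−t−r_j, r−r_j)) + Σ_{j=1,2} C(δ, r_j)·C(n−r_j−1, r−r_j−1) + C(2s−t, r)·C(r, r₁). -/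
/-- The copies of the complete bipartite graph `K_{r₁,r₂}` in `G`: pairs of disjoint
vertex sets of sizes `r₁` and `r₂` with all cross edges present.  When `r₁ ≠ r₂` each
(unordered) copy corresponds to exactly one such pair. -/
def bipCopies {V : Type*} (G : SimpleGraph V) (r₁ r₂ : ℕ) : Set (Finset V × Finset V) :=
  {p | p.1.card = r₁ ∧ p.2.card = r₂ ∧ Disjoint p.1 p.2 ∧
    ∀ a ∈ p.1, ∀ b ∈ p.2, G.Adj a b}

open Finset

namespace Finset

variable {α : Type*} [DecidableEq α]

lemma card_filter_mem_powersetCard (X : Finset α) {x : α} (hx : x ∈ X) {k : ℕ} (hk : 0 < k) :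
    #((X.powersetCard k).filter (x ∈ ·)) = (#X - 1).choose (k - 1) := by
  simpa using card_filter_powersetCard_subset {x} X k (by simpa) (by simpa)

lemma card_filter_not_subset_powersetCard (X Y : Finset α) (k : ℕ) :
    #((X.powersetCard k).filter (¬ · ⊆ Y)) = (#X).choose k - (#(X ∩ Y)).choose k := by
  have hsub : (X.powersetCard k).filter (· ⊆ Y) = (X ∩ Y).powersetCard k := by
    ext S
    simp only [mem_filter, mem_powersetCard, subset_inter_iff]
    tauto
  rw [filter_not, card_sdiff_of_subset (filter_subset _ _), hsub, card_powersetCard,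
    card_powersetCard]

lemma card_pairs_eq_card_mul_of_fiber [Fintype α] {β : Type*} [Fintype β] [DecidableEq β]
    (s : Finset β) (t : β → Finset α) {c : ℕ} (h : ∀ y ∈ s, #(t y) = c) :
    #{p : α × β | p.2 ∈ s ∧ p.1 ∈ t p.2} = #s * c := by
  have hmap : ({p : α × β | p.2 ∈ s ∧ p.1 ∈ t p.2} : Finset (α × β)) =
      (s.sigma t).map ((Equiv.sigmaEquivProd β α).toEmbedding.trans
        (Equiv.prodComm β α).toEmbedding) := by
    ext ⟨x, y⟩
    simp [Equiv.sigmaEquivProd]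
  rw [hmap, card_map, card_sigma, sum_const_nat h]

end Finset

namespace SimpleGraph

variable {V : Type*} {G : SimpleGraph V}

lemma snd_subset_of_not_subset_fst {u : V} {A K : Finset V}
    (hout : ∀ w ∉ K, w ≠ u → ∀ v, G.Adj w v → v ∈ A) {S T : Finset V}
    (hadj : ∀ x ∈ S, ∀ y ∈ T, G.Adj x y) (huS : u ∉ S) (hSK : ¬ S ⊆ K) : T ⊆ A := by
  obtain ⟨w, hwS, hwK⟩ := not_subset.1 hSK
  exact fun y hy => hout w hwK (ne_of_mem_of_not_mem hwS huS) y (hadj w hwS y hy)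

variable [Fintype V] [DecidableEq V] (G) [DecidableRel G.Adj]

def bipCopiesFinset (a b : ℕ) : Finset (Finset V × Finset V) :=
  {p | #p.1 = a ∧ #p.2 = b ∧ Disjoint p.1 p.2 ∧ ∀ x ∈ p.1, ∀ y ∈ p.2, G.Adj x y}

lemma coe_bipCopiesFinset (a b : ℕ) : (G.bipCopiesFinset a b : Set _) = bipCopies G a b := by
  ext
  simp [bipCopiesFinset, bipCopies]

lemma card_filter_bipCopiesFinset_swap (P : Finset V → Finset V → Prop) [DecidableRel P]
    (a b : ℕ) :
    #((G.bipCopiesFinset a b).filter fun p => P p.2 p.1) =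
      #((G.bipCopiesFinset b a).filter fun p => P p.1 p.2) := by
  refine card_equiv (Equiv.prodComm _ _) fun p => ?_
  simp only [bipCopiesFinset, mem_filter, mem_univ, true_and, Equiv.prodComm_apply,
    Prod.fst_swap, Prod.snd_swap, disjoint_comm]
  constructor
  · rintro ⟨⟨h1, h2, h3, h4⟩, h5⟩
    exact ⟨⟨h2, h1, h3, fun y hy x hx => (h4 x hx y hy).symm⟩, h5⟩
  · rintro ⟨⟨h1, h2, h3, h4⟩, h5⟩
    exact ⟨⟨h2, h1, h3, fun x hx y hy => (h4 y hy x hx).symm⟩, h5⟩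

lemma card_filter_mem_fst_bipCopiesFinset {u : V} {D : Finset V} (hu : ∀ v, G.Adj u v ↔ v ∈ D)
    (hD : ∀ v ∈ D, ∀ w, w ≠ v → G.Adj w v) {a : ℕ} (ha : 0 < a) (b : ℕ) :
    #((G.bipCopiesFinset a b).filter (u ∈ ·.1)) =
      (#D).choose b * (Fintype.card V - b - 1).choose (a - 1) := by
  have hcases : (G.bipCopiesFinset a b).filter (u ∈ ·.1) =
      ({p | p.2 ∈ D.powersetCard b ∧ p.1 ∈ (p.2ᶜ.powersetCard a).filter (u ∈ ·)} :
        Finset (Finset V × Finset V)) := by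
    ext ⟨S, T⟩
    simp only [bipCopiesFinset, mem_filter, mem_univ, true_and, mem_powersetCard,
      subset_compl_iff_disjoint_right]
    constructor
    · rintro ⟨⟨hS, hT, hST, hadj⟩, huS⟩
      exact ⟨⟨fun v hv => (hu v).1 (hadj u huS v hv), hT⟩, ⟨hST, hS⟩, huS⟩
    · rintro ⟨⟨hTD, hT⟩, ⟨hST, hS⟩, huS⟩
      exact ⟨⟨hS, hT, hST, fun x hx y hy =>
        hD y (hTD hy) x fun h => Finset.disjoint_left.1 hST hx (h ▸ hy)⟩, huS⟩
  rw [hcases, card_pairs_eq_card_mul_of_fiber _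
    (fun T : Finset V => (Tᶜ.powersetCard a).filter (u ∈ ·)) fun T hT => ?_, card_powersetCard]
  have huD : u ∉ D := fun h => G.irrefl ((hu u).2 h)
  obtain ⟨hTD, hT⟩ := mem_powersetCard.1 hT
  rw [card_filter_mem_powersetCard _ (mem_compl.2 fun h => huD (hTD h)) ha, card_compl, hT]

lemma card_filter_not_subset_fst_bipCopiesFinset {u : V} {A K : Finset V}
    (hA : ∀ v ∈ A, ∀ w, w ≠ v → w ≠ u → G.Adj w v)
    (hout : ∀ w ∉ K, w ≠ u → ∀ v, G.Adj w v → v ∈ A) (hAK : A ⊆ K) (huK : u ∉ K) (a b : ℕ) :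
    #((G.bipCopiesFinset a b).filter fun p => u ∉ p.1 ∧ u ∉ p.2 ∧ ¬ p.1 ⊆ K) =
      (#A).choose b * ((Fintype.card V - b - 1).choose a - (#K - b).choose a) := by
  have hcases : (G.bipCopiesFinset a b).filter (fun p => u ∉ p.1 ∧ u ∉ p.2 ∧ ¬ p.1 ⊆ K) =
      ({p | p.2 ∈ A.powersetCard b ∧ p.1 ∈ ((insert u p.2)ᶜ.powersetCard a).filter (¬ · ⊆ K)} :
        Finset (Finset V × Finset V)) := by
    ext ⟨S, T⟩
    simp only [bipCopiesFinset, mem_filter, mem_univ, true_and, mem_powersetCard,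
      subset_compl_iff_disjoint_right, disjoint_insert_right]
    constructor
    · rintro ⟨⟨hS, hT, hST, hadj⟩, huS, -, hSK⟩
      exact ⟨⟨snd_subset_of_not_subset_fst hout hadj huS hSK, hT⟩, ⟨⟨huS, hST⟩, hS⟩, hSK⟩
    · rintro ⟨⟨hTA, hT⟩, ⟨⟨huS, hST⟩, hS⟩, hSK⟩
      refine ⟨⟨hS, hT, hST, fun x hx y hy => ?_⟩, huS, fun h => huK (hAK (hTA h)), hSK⟩
      exact hA y (hTA hy) x (fun h => Finset.disjoint_left.1 hST hx (h ▸ hy))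
        (ne_of_mem_of_not_mem hx huS)
  rw [hcases, card_pairs_eq_card_mul_of_fiber _
    (fun T : Finset V => ((insert u T)ᶜ.powersetCard a).filter (¬ · ⊆ K)) fun T hT => ?_,
    card_powersetCard]
  obtain ⟨hTA, hT⟩ := mem_powersetCard.1 hT
  have huT : u ∉ T := fun h => huK (hAK (hTA h))
  rw [card_filter_not_subset_powersetCard, card_compl, card_insert_of_notMem huT, hT,
    inter_comm, ← sdiff_eq_inter_compl, sdiff_insert_of_notMem huK,
    card_sdiff_of_subset (hTA.trans hAK), hT, Nat.sub_sub]

lemma card_filter_subset_subset_bipCopiesFinset {K : Finset V} (hK : G.IsClique (K : Set V))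
    (a b : ℕ) :
    #((G.bipCopiesFinset a b).filter fun p => p.1 ⊆ K ∧ p.2 ⊆ K) =
      (#K).choose (a + b) * (a + b).choose a := by
  have hcases : (G.bipCopiesFinset a b).filter (fun p => p.1 ⊆ K ∧ p.2 ⊆ K) =
      ({p | p.2 ∈ K.powersetCard b ∧ p.1 ∈ (K \ p.2).powersetCard a} :
        Finset (Finset V × Finset V)) := by
    ext ⟨S, T⟩
    simp only [bipCopiesFinset, mem_filter, mem_univ, true_and, mem_powersetCard, subset_sdiff]
    constructor
    · rintro ⟨⟨hS, hT, hST, -⟩, hSK, hTK⟩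
      exact ⟨⟨hTK, hT⟩, ⟨hSK, hST⟩, hS⟩
    · rintro ⟨⟨hTK, hT⟩, ⟨hSK, hST⟩, hS⟩
      exact ⟨⟨hS, hT, hST, fun x hx y hy =>
        hK (hSK hx) (hTK hy) fun h => Finset.disjoint_left.1 hST hx (h ▸ hy)⟩, hSK, hTK⟩
  rw [hcases, card_pairs_eq_card_mul_of_fiber _ (fun T => (K \ T).powersetCard a) fun T hT => ?_,
    card_powersetCard, Nat.choose_symm_add, Nat.choose_mul (Nat.le_add_left b a),
    Nat.add_sub_cancel]
  obtain ⟨hTK, hT⟩ := mem_powersetCard.1 hT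
  rw [card_powersetCard, card_sdiff_of_subset hTK, hT]

lemma card_bipCopiesFinset_eq_sum_cases {u : V} {A K : Finset V}
    (hout : ∀ w ∉ K, w ≠ u → ∀ v, G.Adj w v → v ∈ A) (hAK : A ⊆ K) (huK : u ∉ K) (a b : ℕ) :
    #(G.bipCopiesFinset a b) =
      #((G.bipCopiesFinset a b).filter fun p => u ∉ p.2 ∧ u ∉ p.1 ∧ ¬ p.2 ⊆ K) +
      #((G.bipCopiesFinset a b).filter fun p => u ∉ p.1 ∧ u ∉ p.2 ∧ ¬ p.1 ⊆ K) +
      (#((G.bipCopiesFinset a b).filter (u ∈ ·.2)) +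
        #((G.bipCopiesFinset a b).filter (u ∈ ·.1))) +
      #((G.bipCopiesFinset a b).filter fun p => p.1 ⊆ K ∧ p.2 ⊆ K) := by
  simp only [card_filter, card_eq_sum_ones (G.bipCopiesFinset a b), ← sum_add_distrib]
  refine sum_congr rfl fun ⟨S, T⟩ hST => ?_
  simp only [bipCopiesFinset, mem_filter, mem_univ, true_and] at hST
  obtain ⟨-, -, hdisj, hadj⟩ := hST
  have hT : u ∉ S → ¬ S ⊆ K → T ⊆ K := fun huS hSK =>
    (snd_subset_of_not_subset_fst hout hadj huS hSK).trans hAK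
  have hS : u ∉ T → ¬ T ⊆ K → S ⊆ K := fun huT hTK =>
    (snd_subset_of_not_subset_fst hout (fun y hy x hx => (hadj x hx y hy).symm) huT hTK).trans hAK
  have huST : u ∈ S → u ∉ T := fun huS huT => Finset.disjoint_left.1 hdisj huS huT
  have hSK : S ⊆ K → u ∉ S := fun h huS => huK (h huS)
  have hTK : T ⊆ K → u ∉ T := fun h huT => huK (h huT)
  clear hadj hdisj hout
  -- A part leaving `K` other than through `u` pins the other part inside `A ⊆ K`, so the five
  -- classes partition the copies.
  by_cases h1 : u ∈ S <;> by_cases h2 : u ∈ T <;> by_cases h3 : S ⊆ K <;> by_cases h4 : T ⊆ K <;>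
    simp_all

/-- In `G(n,s,t)`: `u` is the vertex that lost `t - δ` edges, `D` its neighbourhood, `A` the
`K_t`, and `K` the clique `K_t ∨ K_{2s-2t}`. -/
theorem card_bipCopiesFinset_of_nested {u : V} {D A K : Finset V}
    (hu : ∀ v, G.Adj u v ↔ v ∈ D) (hD : ∀ v ∈ D, ∀ w, w ≠ v → G.Adj w v)
    (hA : ∀ v ∈ A, ∀ w, w ≠ v → w ≠ u → G.Adj w v) (hK : G.IsClique (K : Set V))
    (hout : ∀ w ∉ K, w ≠ u → ∀ v, G.Adj w v → v ∈ A) (hAK : A ⊆ K) (huK : u ∉ K)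
    {a b : ℕ} (ha : 0 < a) (hb : 0 < b) :
    #(G.bipCopiesFinset a b) =
      ((#A).choose a * ((Fintype.card V - a - 1).choose b - (#K - a).choose b) +
        (#A).choose b * ((Fintype.card V - b - 1).choose a - (#K - b).choose a)) +
      ((#D).choose a * (Fintype.card V - a - 1).choose (b - 1) +
        (#D).choose b * (Fintype.card V - b - 1).choose (a - 1)) +
      (#K).choose (a + b) * (a + b).choose a := by
  rw [G.card_bipCopiesFinset_eq_sum_cases hout hAK huK,
    G.card_filter_bipCopiesFinset_swap (fun S T => u ∉ S ∧ u ∉ T ∧ ¬ S ⊆ K),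
    G.card_filter_bipCopiesFinset_swap (fun S _ => u ∈ S),
    G.card_filter_not_subset_fst_bipCopiesFinset hA hout hAK huK,
    G.card_filter_not_subset_fst_bipCopiesFinset hA hout hAK huK,
    G.card_filter_mem_fst_bipCopiesFinset hu hD hb,
    G.card_filter_mem_fst_bipCopiesFinset hu hD ha,
    G.card_filter_subset_subset_bipCopiesFinset hK]

end SimpleGraph

lemma GExt_adj_iff {n s t δ : ℕ} {i j : Fin n} :
    (GExt n s t δ).Adj i j ↔ (i : ℕ) ≠ j ∧
      (((i : ℕ) < 2 * s - t ∧ (j : ℕ) < 2 * s - t) ∨ (i : ℕ) < t ∨ (j : ℕ) < t) ∧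
      ¬((i : ℕ) = n - 1 ∧ δ ≤ j) ∧ ¬((j : ℕ) = n - 1 ∧ δ ≤ i) := by
  rw [Fin.val_ne_iff]
  rfl

theorem GExt_bipartite_count_general (n s t δ r r₁ r₂ : ℕ) (hr₁ : 0 < r₁) (hr₂ : 0 < r₂)
    (hr : r = r₁ + r₂) (hδt : δ ≤ t) (hts : t ≤ s) (hn2s : 2 * s + 1 ≤ n) :
    (bipCopies (GExt n s t δ) r₁ r₂).ncard =
      (Nat.choose t r₁ *
          (Nat.choose (n - r₁ - 1) (r - r₁) - Nat.choose (2 * s - t - r₁) (r - r₁)) +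
        Nat.choose t r₂ *
          (Nat.choose (n - r₂ - 1) (r - r₂) - Nat.choose (2 * s - t - r₂) (r - r₂))) +
      (Nat.choose δ r₁ * Nat.choose (n - r₁ - 1) (r - r₁ - 1) +
        Nat.choose δ r₂ * Nat.choose (n - r₂ - 1) (r - r₂ - 1)) +
      Nat.choose (2 * s - t) r * Nat.choose r r₁ := by
  classical
  rw [← SimpleGraph.coe_bipCopiesFinset, Set.ncard_coe_finset,
    (GExt n s t δ).card_bipCopiesFinset_of_nested (u := ⟨n - 1, by omega⟩)
      (D := {v | (v : ℕ) < δ}) (A := {v | (v : ℕ) < t}) (K := {v | (v : ℕ) < 2 * s - t})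
      ?_ ?_ ?_ ?_ ?_ ?_ ?_ hr₁ hr₂]
  · simp only [Fin.card_filter_val_lt, Fintype.card_fin, hr, Nat.add_sub_cancel_left,
      Nat.add_sub_cancel]
    rw [min_eq_right (by omega), min_eq_right (by omega), min_eq_right (by omega)]
  all_goals
    simp only [SimpleGraph.isClique_iff, Set.Pairwise, GExt_adj_iff, ← Fin.val_ne_iff, mem_coe,
      mem_filter, mem_univ, true_and, subset_iff]
    intros
    omega

/-- for `r = r₁ + r₂`, `r₁ ≠ r₂`, `δ ≤ t ≤ s` and `n ≥ 2s+1`, the number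
of copies of `K_{r₁,r₂}` in `G(n,s,t)` equals
`Σ_{j=1,2} C(t, r_j)·(C(n−r_j−1, r−r_j) − C(2s−t−r_j, r−r_j))
  + Σ_{j=1,2} C(δ, r_j)·C(n−r_j−1, r−r_j−1) + C(2s−t, r)·C(r, r₁)`. -/
theorem GExt_bipartite_count (n s t δ r r₁ r₂ : ℕ) (hn : 0 < n) (hs : 0 < s) (ht : 0 < t)
    (hδ : 0 < δ) (hr₁ : 0 < r₁) (hr₂ : 0 < r₂) (hr : r = r₁ + r₂) (hne : r₁ ≠ r₂)
    (hδt : δ ≤ t) (hts : t ≤ s) (hn2s : 2 * s + 1 ≤ n) :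
    (bipCopies (GExt n s t δ) r₁ r₂).ncard =
      (Nat.choose t r₁ *
          (Nat.choose (n - r₁ - 1) (r - r₁) - Nat.choose (2 * s - t - r₁) (r - r₁)) +
        Nat.choose t r₂ *
          (Nat.choose (n - r₂ - 1) (r - r₂) - Nat.choose (2 * s - t - r₂) (r - r₂))) +
      (Nat.choose δ r₁ * Nat.choose (n - r₁ - 1) (r - r₁ - 1) +
        Nat.choose δ r₂ * Nat.choose (n - r₂ - 1) (r - r₂ - 1)) +
      Nat.choose (2 * s - t) r * Nat.choose r r₁ :=
  GExt_bipartite_count_general n s t δ r r₁ r₂ hr₁ hr₂ hr hδt hts hn2s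
end
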